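/- arXiv:2111.13979 — 7 statements merged into one kernel-verified Lean document; each statement's English description precedes it below -/
import Mathlib

section
/- Let S ∈ C([0,T],ℝ) and p > 0. Then S has p-th variation along a sequence of partitions π (in the sense of weak convergence of the discrete measures μⁿ = ∑ δ_{t_j}|S(t_{j+1})-S(t_j)|^p to an atomless measure μ) if and only if there exists a continuous function [S]^p such that for all t ∈ [0,T], ∑_{[t_j,t_{j+1}]∈πₙ, t_j ≤ t} |S(t_{j+1}) - S(t_j)|^p → [S]^p(t); moreover in that case the convergence is uniform in t. -/
/-!
The discrete measures `μⁿ` are finite measures carried by `[0,T]` whose distribution functions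
are the partial sums: `pvarSum T π S p u n = μⁿ (-∞, u]`. For such measures, weak convergence to
an atomless limit is the same as pointwise convergence of distribution functions to a continuous
limit. One direction squeezes the indicator of `(-∞, u]` between two piecewise linear bounded
continuous functions; for the other, the limit is the Stieltjes measure of `[S]^p`, and `∫ g`
is approximated by Riemann–Stieltjes sums on a fine mesh, uniformly in the measure. That
Stieltjes measure has no atom at `0` because `[S]^p(0) = 0`: at most one interval of `πₙ`
starting at `0` is nondegenerate, and its increment is controlled by the oscillation.
Uniformity is Pólya's theorem: monotone functions converging pointwise to a continuous limit on
a compact interval converge uniformly.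
-/

open Filter Topology MeasureTheory

structure PartitionSeq (T : ℝ) where
  N : ℕ → ℕ
  t : ℕ → ℕ → ℝ
  mono : ∀ n, Monotone (t n)
  first : ∀ n, t n 0 = 0
  last : ∀ n k, N n ≤ k → t n k = T

def oscVanishes (T : ℝ) (π : PartitionSeq T) (S : ℝ → ℝ) : Prop :=
  ∀ ε > 0, ∃ n₀ : ℕ, ∀ n ≥ n₀, ∀ i < π.N n,
    ∀ r ∈ Set.Icc (π.t n i) (π.t n (i + 1)),
      ∀ s ∈ Set.Icc (π.t n i) (π.t n (i + 1)), |S s - S r| ≤ ε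

noncomputable def pvarSum (T : ℝ) (π : PartitionSeq T) (S : ℝ → ℝ) (p u : ℝ) (n : ℕ) : ℝ :=
  ∑ i ∈ Finset.range (π.N n),
    if π.t n i ≤ u then |S (π.t n (i + 1)) - S (π.t n i)| ^ p else 0

/-- Weak convergence of the discrete measures
`μⁿ = ∑_{[t_j,t_{j+1}]∈πₙ} δ_{t_j} |S(t_{j+1}) - S(t_j)|^p` to an atomless finite measure,
tested against bounded continuous functions. -/
def HasWeakPthVariation (T : ℝ) (π : PartitionSeq T) (S : ℝ → ℝ) (p : ℝ) : Prop :=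
  ∃ μ : Measure ℝ, IsFiniteMeasure μ ∧ (∀ x : ℝ, μ {x} = 0) ∧
    ∀ g : BoundedContinuousFunction ℝ ℝ,
      Tendsto (fun n => ∑ i ∈ Finset.range (π.N n),
          g (π.t n i) * |S (π.t n (i + 1)) - S (π.t n i)| ^ p) atTop
        (𝓝 (∫ x, g x ∂μ))

open Set BoundedContinuousFunction

noncomputable def ramp (a b : ℝ) : ℝ →ᵇ ℝ :=
  .mkOfBound ⟨fun x => max 0 (min 1 ((b - x) / (b - a))), by fun_prop⟩ 1 fun x y => by
    simp only [ContinuousMap.coe_mk, Real.dist_eq, abs_sub_le_iff]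
    constructor <;> linarith [le_max_left 0 (min 1 ((b - x) / (b - a))),
      le_max_left 0 (min 1 ((b - y) / (b - a))),
      max_le zero_le_one (min_le_left 1 ((b - x) / (b - a))),
      max_le zero_le_one (min_le_left 1 ((b - y) / (b - a)))]

section ramp
variable {a b : ℝ}

lemma ramp_apply (x : ℝ) : ramp a b x = max 0 (min 1 ((b - x) / (b - a))) := rfl

lemma indicator_Iic_le_ramp (hab : a < b) (x : ℝ) :
    (Iic a).indicator (1 : ℝ → ℝ) x ≤ ramp a b x := by
  rw [ramp_apply]
  by_cases hx : x ≤ a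
  · rw [indicator_of_mem (mem_Iic.2 hx), Pi.one_apply,
      min_eq_left ((one_le_div (by linarith)).2 (by linarith))]
    exact le_max_right _ _
  · rw [indicator_of_notMem (mt mem_Iic.1 hx)]
    exact le_max_left _ _

lemma ramp_le_indicator_Iic (hab : a < b) (x : ℝ) :
    ramp a b x ≤ (Iic b).indicator (1 : ℝ → ℝ) x := by
  rw [ramp_apply]
  by_cases hx : x ≤ b
  · rw [indicator_of_mem (mem_Iic.2 hx), Pi.one_apply]
    exact max_le zero_le_one (min_le_left _ _)
  · rw [indicator_of_notMem (mt mem_Iic.1 hx), max_eq_left ((min_le_right _ _).trans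
      (div_nonpos_of_nonpos_of_nonneg (by linarith) (by linarith)))]

variable {ν : Measure ℝ} [IsFiniteMeasure ν]

lemma measureReal_Iic_le_integral_ramp (hab : a < b) :
    ν.real (Iic a) ≤ ∫ x, ramp a b x ∂ν := by
  rw [← integral_indicator_one measurableSet_Iic]
  exact integral_mono ((integrable_const (1 : ℝ)).indicator measurableSet_Iic)
    ((ramp a b).integrable ν) (indicator_Iic_le_ramp hab)

lemma integral_ramp_le_measureReal_Iic (hab : a < b) :
    ∫ x, ramp a b x ∂ν ≤ ν.real (Iic b) := by
  rw [← integral_indicator_one measurableSet_Iic]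
  exact integral_mono ((ramp a b).integrable ν)
    ((integrable_const (1 : ℝ)).indicator measurableSet_Iic) (ramp_le_indicator_Iic hab)

end ramp

theorem continuous_measureReal_Iic (μ : Measure ℝ) [IsFiniteMeasure μ] [NullSingletonClass μ] :
    Continuous fun u => μ.real (Iic u) := by
  refine continuous_iff_continuousAt.2 fun u => ?_
  have hball : Tendsto (fun v => μ.real (Icc (u - |v - u|) (u + |v - u|))) (𝓝 u) (𝓝 0) := by
    have := (ENNReal.tendsto_toReal ENNReal.zero_ne_top).comp ((tendsto_measure_Icc μ u).comp
      ((continuous_sub_right u).abs.tendsto' u 0 (by simp)))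
    simpa [Function.comp_def, measureReal_def] using this
  refine tendsto_iff_dist_tendsto_zero.2 (squeeze_zero (fun _ => dist_nonneg) (fun v => ?_) hball)
  refine (abs_measureReal_sub_le_measureReal_symmDiff measurableSet_Iic.nullMeasurableSet
    measurableSet_Iic.nullMeasurableSet).trans (measureReal_mono fun x hx => ?_)
  rcases hx with ⟨hxv, hxu⟩ | ⟨hxu, hxv⟩ <;> simp only [mem_Iic, not_le] at * <;>
    constructor <;> cases abs_cases (v - u) <;> linarith

theorem tendsto_measureReal_Iic_of_tendsto_integral {ι : Type*} {L : Filter ι}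
    {μs : ι → Measure ℝ} [∀ i, IsFiniteMeasure (μs i)] {μ : Measure ℝ} [IsFiniteMeasure μ]
    [NullSingletonClass μ]
    (h : ∀ g : ℝ →ᵇ ℝ, Tendsto (fun i => ∫ x, g x ∂μs i) L (𝓝 (∫ x, g x ∂μ))) (u : ℝ) :
    Tendsto (fun i => (μs i).real (Iic u)) L (𝓝 (μ.real (Iic u))) := by
  have hcont := (continuous_measureReal_Iic μ).continuousAt (x := u)
  refine tendsto_order.2 ⟨fun c hc => ?_, fun c hc => ?_⟩
  · obtain ⟨v, hcv, hvu⟩ := (((hcont.eventually (lt_mem_nhds hc)).filter_mono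
      nhdsWithin_le_nhds).and (self_mem_nhdsWithin (s := Iio u))).exists
    filter_upwards [(h (ramp v u)).eventually
      (lt_mem_nhds (hcv.trans_le (measureReal_Iic_le_integral_ramp hvu)))] with i hi
    exact hi.trans_le (integral_ramp_le_measureReal_Iic hvu)
  · obtain ⟨v, hcv, huv⟩ := (((hcont.eventually (gt_mem_nhds hc)).filter_mono
      nhdsWithin_le_nhds).and (self_mem_nhdsWithin (s := Ioi u))).exists
    filter_upwards [(h (ramp u v)).eventually
      (gt_mem_nhds ((integral_ramp_le_measureReal_Iic huv).trans_lt hcv))] with i hi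
    exact (measureReal_Iic_le_integral_ramp huv).trans_lt hi

noncomputable def uniformMesh (a b : ℝ) (m k : ℕ) : ℝ := a + k * ((b - a) / m)

section uniformMesh
variable {a b : ℝ} {m k : ℕ}

lemma uniformMesh_zero : uniformMesh a b m 0 = a := by simp [uniformMesh]

lemma uniformMesh_self (hm : m ≠ 0) : uniformMesh a b m m = b := by
  rw [uniformMesh, mul_div_cancel₀ (b - a) (Nat.cast_ne_zero.2 hm)]; ring

lemma uniformMesh_succ_sub :
    uniformMesh a b m (k + 1) - uniformMesh a b m k = (b - a) / m := by
  simp only [uniformMesh]; push_cast; ring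

lemma monotone_uniformMesh (hab : a ≤ b) : Monotone (uniformMesh a b m) := fun k l hkl => by
  simp only [uniformMesh]; gcongr

lemma uniformMesh_mem_Icc (hab : a ≤ b) (hm : m ≠ 0) (hk : k ≤ m) :
    uniformMesh a b m k ∈ Icc a b :=
  ⟨uniformMesh_zero.ge.trans (monotone_uniformMesh hab k.zero_le),
    (monotone_uniformMesh hab hk).trans (uniformMesh_self hm).le⟩

lemma exists_nat_ne_zero_div_lt (x : ℝ) {δ : ℝ} (hδ : 0 < δ) : ∃ m : ℕ, m ≠ 0 ∧ x / m < δ := by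
  obtain ⟨m, hm⟩ := exists_nat_gt (x / δ)
  refine ⟨m + 1, m.succ_ne_zero, ?_⟩
  rw [div_lt_iff₀ hδ] at hm
  rw [div_lt_iff₀ (by positivity)]
  push_cast
  linarith

lemma exists_mem_Icc_uniformMesh (hab : a ≤ b) (hm : m ≠ 0) {x : ℝ} (hx : x ∈ Icc a b) :
    ∃ k < m, x ∈ Icc (uniformMesh a b m k) (uniformMesh a b m (k + 1)) := by
  rcases hx.1.eq_or_lt with rfl | hax
  · exact ⟨0, Nat.pos_of_ne_zero hm, uniformMesh_zero.le,
      uniformMesh_zero.ge.trans (monotone_uniformMesh hab zero_le_one)⟩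
  obtain ⟨k, hk, hxk⟩ := mem_iUnion₂.1 <| Ioc_subset_biUnion_Ioc m (uniformMesh a b m)
    ⟨uniformMesh_zero.trans_lt hax, hx.2.trans (uniformMesh_self hm).ge⟩
  exact ⟨k, Finset.mem_range.1 hk, Ioc_subset_Icc_self hxk⟩

lemma _root_.ContinuousOn.exists_uniformMesh_dist_lt {V : ℝ → ℝ} (hV : ContinuousOn V (Icc a b))
    (hab : a ≤ b) {ε : ℝ} (hε : 0 < ε) :
    ∃ m ≠ 0, ∀ k < m, ∀ x ∈ Icc (uniformMesh a b m k) (uniformMesh a b m (k + 1)),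
      dist (V x) (V (uniformMesh a b m k)) < ε ∧
        dist (V x) (V (uniformMesh a b m (k + 1))) < ε := by
  obtain ⟨δ, hδ, hVδ⟩ := Metric.uniformContinuousOn_iff.1
    (isCompact_Icc.uniformContinuousOn_of_continuous hV) ε hε
  obtain ⟨m, hm, hstep⟩ := exists_nat_ne_zero_div_lt (b - a) hδ
  refine ⟨m, hm, fun k hk x hx => ?_⟩
  have hk₀ := uniformMesh_mem_Icc hab hm hk.le
  have hk₁ := uniformMesh_mem_Icc hab hm hk
  have hx' : x ∈ Icc a b := ⟨hk₀.1.trans hx.1, hx.2.trans hk₁.2⟩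
  have hcell := uniformMesh_succ_sub (a := a) (b := b) (m := m) (k := k)
  refine ⟨hVδ x hx' _ hk₀ ?_, hVδ x hx' _ hk₁ ?_⟩ <;>
    rw [Real.dist_eq, abs_lt] <;> constructor <;> linarith [hx.1, hx.2]

end uniformMesh

theorem tendstoUniformlyOn_Icc_of_monotoneOn {ι : Type*} {L : Filter ι} {F : ι → ℝ → ℝ}
    {V : ℝ → ℝ} {a b : ℝ} (hF : ∀ i, MonotoneOn (F i) (Icc a b)) (hV : ContinuousOn V (Icc a b))
    (h : ∀ x ∈ Icc a b, Tendsto (fun i => F i x) L (𝓝 (V x))) :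
    TendstoUniformlyOn F V L (Icc a b) := by
  obtain hab | hba := le_or_gt a b
  swap; · simp [Icc_eq_empty_of_lt hba, tendstoUniformlyOn_empty]
  rw [Metric.tendstoUniformlyOn_iff]
  intro ε hε
  obtain ⟨m, hm, hVosc⟩ := hV.exists_uniformMesh_dist_lt hab (half_pos hε)
  set U := uniformMesh a b m
  have hU : ∀ k ≤ m, U k ∈ Icc a b := fun k => uniformMesh_mem_Icc hab hm
  have hmesh : ∀ᶠ i in L, ∀ k ∈ Finset.range (m + 1), dist (V (U k)) (F i (U k)) < ε / 2 :=
    (Finset.eventually_all _).2 fun k hk => by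
      simpa only [dist_comm] using Metric.tendsto_nhds.1
        (h _ (hU k (Finset.mem_range_succ_iff.1 hk))) _ (half_pos hε)
  filter_upwards [hmesh] with i hi x hx
  obtain ⟨k, hk, hxk⟩ := exists_mem_Icc_uniformMesh hab hm hx
  obtain ⟨hVk, hVk'⟩ := hVosc k hk x hxk
  have hFk : F i (U k) ≤ F i x := hF i (hU k hk.le) hx hxk.1
  have hFk' : F i x ≤ F i (U (k + 1)) := hF i hx (hU (k + 1) hk) hxk.2
  have hik := hi k (Finset.mem_range.2 (by omega))
  have hik' := hi (k + 1) (Finset.mem_range.2 (by omega))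
  rw [Real.dist_eq, abs_lt] at hVk hVk' hik hik' ⊢
  constructor <;> linarith

lemma measureReal_Ioc_eq_sub (ν : Measure ℝ) [IsFiniteMeasure ν] {u v : ℝ} (huv : u ≤ v) :
    ν.real (Ioc u v) = ν.real (Iic v) - ν.real (Iic u) := by
  rw [← Iic_sdiff_Iic, measureReal_sdiff (Iic_subset_Iic.2 huv) measurableSet_Iic]

lemma measureReal_Iic_eq_zero_of_lt {ν : Measure ℝ} [IsFiniteMeasure ν] {a b u : ℝ}
    (hν : ν (Icc a b)ᶜ = 0) (hua : u < a) : ν.real (Iic u) = 0 :=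
  (measureReal_eq_zero_iff (measure_ne_top ν _)).2 <| measure_mono_null
    (fun x hx (hx' : x ∈ Icc a b) => (mem_Iic.1 hx).not_gt (hua.trans_le hx'.1)) hν

noncomputable def riemannStieltjesSum (g : ℝ → ℝ) (U : ℕ → ℝ) (m : ℕ) (ν : Measure ℝ) : ℝ :=
  ∑ k ∈ Finset.range m, g (U k) * ν.real (Ioc (U k) (U (k + 1)))

section riemannStieltjesSum
variable {U : ℕ → ℝ} {m : ℕ}

theorem abs_integral_sub_riemannStieltjesSum_le {ν : Measure ℝ} [IsFiniteMeasure ν]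
    {g : ℝ →ᵇ ℝ} {ε : ℝ} (hU : Monotone U) (hν : ν (Ioc (U 0) (U m))ᶜ = 0)
    (hg : ∀ k < m, ∀ x ∈ Ioc (U k) (U (k + 1)), |g x - g (U k)| ≤ ε) :
    |∫ x, g x ∂ν - riemannStieltjesSum g U m ν| ≤ ε * ν.real (Ioc (U 0) (U m)) := by
  have hconst : ∀ {x y : ℝ} (c : ℝ), x ≤ y → ∫ _ in x..y, c ∂ν = c * ν.real (Ioc x y) :=
    fun c hxy => by
      rw [intervalIntegral.integral_const', Ioc_eq_empty hxy.not_gt, measureReal_empty, sub_zero,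
        smul_eq_mul, mul_comm]
  have hg_int : ∀ x y, IntervalIntegrable g ν x y :=
    fun _ _ => (g.integrable ν).intervalIntegrable
  have hsplit : ∫ x, g x ∂ν - riemannStieltjesSum g U m ν
      = ∑ k ∈ Finset.range m, ∫ x in U k..U (k + 1), (g x - g (U k)) ∂ν := by
    have hsupp : ∫ x, g x ∂ν = ∫ x in U 0..U m, g x ∂ν := by
      rw [intervalIntegral.integral_of_le (hU m.zero_le),
        Measure.restrict_eq_self_of_ae_mem (s := Ioc (U 0) (U m)) (mem_ae_iff.2 hν)]
    rw [hsupp, riemannStieltjesSum,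
      ← intervalIntegral.sum_integral_adjacent_intervals fun k _ => hg_int _ _,
      ← Finset.sum_sub_distrib]
    refine Finset.sum_congr rfl fun k _ => ?_
    rw [intervalIntegral.integral_sub (hg_int _ _) intervalIntegrable_const,
      hconst _ (hU k.le_succ)]
  calc _ = |∑ k ∈ Finset.range m, ∫ x in U k..U (k + 1), (g x - g (U k)) ∂ν| := by rw [hsplit]
    _ ≤ ∑ k ∈ Finset.range m, ∫ _ in U k..U (k + 1), ε ∂ν := by
      refine (Finset.abs_sum_le_sum_abs _ _).trans (Finset.sum_le_sum fun k hk => ?_)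
      exact intervalIntegral.norm_integral_le_of_norm_le (hU k.le_succ)
        (ae_of_all _ fun x hx =>
          (Real.norm_eq_abs _).trans_le (hg k (Finset.mem_range.1 hk) x hx))
        intervalIntegrable_const
    _ = ε * ν.real (Ioc (U 0) (U m)) := by
      rw [intervalIntegral.sum_integral_adjacent_intervals fun _ _ => intervalIntegrable_const,
        hconst _ (hU m.zero_le)]

lemma exists_abs_integral_sub_riemannStieltjesSum_le (g : ℝ →ᵇ ℝ) {a b η : ℝ} (hab : a ≤ b)
    (hη : 0 < η) :
    ∃ (m : ℕ) (U : ℕ → ℝ), Monotone U ∧ (∀ k ≤ m, U k ≤ b) ∧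
      ∀ (ν : Measure ℝ) [IsFiniteMeasure ν], ν (Icc a b)ᶜ = 0 →
        |∫ x, g x ∂ν - riemannStieltjesSum g U m ν| ≤ η * ν.real (Iic b) := by
  -- the mesh starts below `a`, so that an atom of `ν` at `a` lies inside the first cell
  have hab' : a - 1 ≤ b := by linarith
  obtain ⟨m, hm, hgosc⟩ := g.continuous.continuousOn.exists_uniformMesh_dist_lt hab' hη
  set U := uniformMesh (a - 1) b m
  have hU0 : U 0 = a - 1 := uniformMesh_zero
  have hUm : U m = b := uniformMesh_self hm
  refine ⟨m, U, monotone_uniformMesh hab', fun k hk => (uniformMesh_mem_Icc hab' hm hk).2,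
    fun ν _ hν => ?_⟩
  have hsupp : ν (Ioc (U 0) (U m))ᶜ = 0 := measure_mono_null (compl_subset_compl.2 fun x hx =>
    ⟨by rw [hU0]; linarith [hx.1], hUm.symm ▸ hx.2⟩) hν
  exact (abs_integral_sub_riemannStieltjesSum_le (monotone_uniformMesh hab') hsupp
    fun k hk x hx => (hgosc k hk x (Ioc_subset_Icc_self hx)).1.le).trans
    (mul_le_mul_of_nonneg_left (measureReal_mono
      (Ioc_subset_Iic_self.trans (Iic_subset_Iic.2 hUm.le))) hη.le)

lemma tendsto_riemannStieltjesSum {ι : Type*} {L : Filter ι} {μs : ι → Measure ℝ}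
    [∀ i, IsFiniteMeasure (μs i)] {μ : Measure ℝ} [IsFiniteMeasure μ] (g : ℝ → ℝ)
    (hU : Monotone U) (h : ∀ k ≤ m, Tendsto (fun i => (μs i).real (Iic (U k))) L
      (𝓝 (μ.real (Iic (U k))))) :
    Tendsto (fun i => riemannStieltjesSum g U m (μs i)) L (𝓝 (riemannStieltjesSum g U m μ)) :=
  tendsto_finsetSum _ fun k hk => by
    have hk' := Finset.mem_range.1 hk
    simp only [measureReal_Ioc_eq_sub _ (hU k.le_succ)]
    exact ((h (k + 1) hk').sub (h k hk'.le)).const_mul _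

end riemannStieltjesSum

theorem tendsto_integral_of_tendsto_measureReal_Iic {ι : Type*} {L : Filter ι}
    {μs : ι → Measure ℝ} [∀ i, IsFiniteMeasure (μs i)] {μ : Measure ℝ} [IsFiniteMeasure μ]
    {a b : ℝ} (hab : a ≤ b) (hμs : ∀ i, μs i (Icc a b)ᶜ = 0) (hμ : μ (Icc a b)ᶜ = 0)
    (h : ∀ u ∈ Icc a b, Tendsto (fun i => (μs i).real (Iic u)) L (𝓝 (μ.real (Iic u))))
    (g : ℝ →ᵇ ℝ) : Tendsto (fun i => ∫ x, g x ∂μs i) L (𝓝 (∫ x, g x ∂μ)) := by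
  have hIic : ∀ u ≤ b, Tendsto (fun i => (μs i).real (Iic u)) L (𝓝 (μ.real (Iic u))) := by
    intro u hub
    rcases lt_or_ge u a with hua | hau
    · simpa only [measureReal_Iic_eq_zero_of_lt (hμs _) hua, measureReal_Iic_eq_zero_of_lt hμ hua]
        using tendsto_const_nhds
    · exact h u ⟨hau, hub⟩
  rw [Metric.tendsto_nhds]
  intro ε hε
  set M := μ.real (Iic b)
  obtain ⟨η, hη, hηε⟩ := exists_pos_mul_lt hε (2 * M + 2)
  obtain ⟨m, U, hU, hUb, happrox⟩ := exists_abs_integral_sub_riemannStieltjesSum_le g hab hη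
  have hR := tendsto_riemannStieltjesSum (μs := μs) (μ := μ) g hU fun k hk => hIic _ (hUb k hk)
  filter_upwards [Metric.tendsto_nhds.1 hR η hη,
    (hIic b le_rfl).eventually (gt_mem_nhds (lt_add_one M))] with i hRi hMi
  have hi := happrox (μs i) (hμs i)
  have hlim := happrox μ hμ
  have hMi' : η * (μs i).real (Iic b) ≤ η * (M + 1) := mul_le_mul_of_nonneg_left hMi.le hη.le
  rw [Real.dist_eq] at hRi ⊢
  rw [abs_sub_comm] at hlim
  have := abs_sub_le (∫ x, g x ∂μs i) (riemannStieltjesSum g U m (μs i)) (∫ x, g x ∂μ)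
  have := abs_sub_le (riemannStieltjesSum g U m (μs i)) (riemannStieltjesSum g U m μ)
    (∫ x, g x ∂μ)
  linarith

theorem exists_measure_Iic_eq_sub {a b : ℝ} (hab : a ≤ b) {V : ℝ → ℝ}
    (hmono : MonotoneOn V (Icc a b)) (hcont : ContinuousOn V (Icc a b)) :
    ∃ μ : Measure ℝ, IsFiniteMeasure μ ∧ NullSingletonClass μ ∧ μ (Icc a b)ᶜ = 0 ∧
      ∀ u ∈ Icc a b, μ.real (Iic u) = V u - V a := by
  set W : ℝ → ℝ := fun x => V (projIcc a b hab x)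
  have hWcont : Continuous W := hcont.comp_continuous
    (continuous_subtype_val.comp continuous_projIcc) fun x => (projIcc a b hab x).2
  let f : StieltjesFunction ℝ := ⟨W, fun x y hxy => hmono (projIcc a b hab x).2
    (projIcc a b hab y).2 (monotone_projIcc hab hxy), fun x => hWcont.continuousWithinAt⟩
  have hleftLim : ∀ x, Function.leftLim f x = f x :=
    fun x => hWcont.continuousWithinAt.leftLim_eq
  have hbot : Tendsto f atBot (𝓝 (V a)) := tendsto_const_nhds.congr' <| by
    filter_upwards [eventually_le_atBot a] with x hx
    simp [f, W, projIcc_of_le_left hab hx]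
  have htop : Tendsto f atTop (𝓝 (V b)) := tendsto_const_nhds.congr' <| by
    filter_upwards [eventually_ge_atTop b] with x hx
    simp [f, W, projIcc_of_right_le hab hx]
  have hfa : f a = V a := by simp [f, W, projIcc_left]
  have hfb : f b = V b := by simp [f, W, projIcc_right]
  refine ⟨f.measure, f.isFiniteMeasure hbot htop, ⟨fun x => ?_⟩, ?_, fun u hu => ?_⟩
  · rw [f.measure_singleton, hleftLim, sub_self, ENNReal.ofReal_zero]
  · refine measure_mono_null (fun x hx => ?_)
      (measure_union_null (s := Iio a) (t := Ioi b) ?_ ?_)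
    · simpa only [mem_union, mem_Iio, mem_Ioi, mem_compl_iff, mem_Icc, not_and_or, not_le]
        using hx
    · rw [f.measure_Iio hbot, hleftLim, hfa, sub_self, ENNReal.ofReal_zero]
    · rw [f.measure_Ioi htop, hfb, sub_self, ENNReal.ofReal_zero]
  · have hfu : f u = V u := by simp [f, W, projIcc_of_mem hab hu]
    rw [measureReal_def, f.measure_Iic hbot, hfu,
      ENNReal.toReal_ofReal (sub_nonneg.2 (hmono ⟨le_rfl, hab⟩ hu hu.1))]

namespace PartitionSeq

variable {T : ℝ} (π : PartitionSeq T)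

lemma t_nonneg (n i : ℕ) : 0 ≤ π.t n i := (π.first n).ge.trans (π.mono n i.zero_le)

lemma t_mem_Icc {n i : ℕ} (hi : i ≤ π.N n) : π.t n i ∈ Icc 0 T :=
  ⟨π.t_nonneg n i, (π.mono n hi).trans (π.last n _ le_rfl).le⟩

end PartitionSeq

noncomputable def pvarMeasure (T : ℝ) (π : PartitionSeq T) (S : ℝ → ℝ) (p : ℝ) (n : ℕ) :
    Measure ℝ :=
  ∑ i ∈ Finset.range (π.N n), (‖S (π.t n (i + 1)) - S (π.t n i)‖₊ ^ p) • Measure.dirac (π.t n i)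

section pvarMeasure
variable {T : ℝ} {π : PartitionSeq T} {S : ℝ → ℝ} {p : ℝ}

instance (n : ℕ) : IsFiniteMeasure (pvarMeasure T π S p n) := by
  unfold pvarMeasure; infer_instance

lemma integral_pvarMeasure (f : ℝ → ℝ) (n : ℕ) :
    ∫ x, f x ∂pvarMeasure T π S p n =
      ∑ i ∈ Finset.range (π.N n), f (π.t n i) * |S (π.t n (i + 1)) - S (π.t n i)| ^ p := by
  rw [pvarMeasure, integral_finsetSum_measure fun i _ =>
    (integrable_dirac enorm_lt_top).smul_measure_nnreal]
  refine Finset.sum_congr rfl fun i _ => ?_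
  rw [integral_smul_nnreal_measure, integral_dirac, NNReal.smul_def, NNReal.coe_rpow, coe_nnnorm,
    Real.norm_eq_abs, smul_eq_mul, mul_comm]

lemma measureReal_Iic_pvarMeasure (u : ℝ) (n : ℕ) :
    (pvarMeasure T π S p n).real (Iic u) = pvarSum T π S p u n := by
  rw [← integral_indicator_one measurableSet_Iic, integral_pvarMeasure, pvarSum]
  refine Finset.sum_congr rfl fun i _ => ?_
  by_cases h : π.t n i ≤ u <;> simp [h]

lemma pvarMeasure_compl_Icc (n : ℕ) : pvarMeasure T π S p n (Icc 0 T)ᶜ = 0 := by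
  rw [pvarMeasure, Measure.finsetSum_apply]
  refine Finset.sum_eq_zero fun i hi => ?_
  rw [Measure.smul_apply, Measure.dirac_apply' _ measurableSet_Icc.compl, indicator_of_notMem
    (not_not.2 (π.t_mem_Icc (Finset.mem_range.1 hi).le)), smul_zero]

lemma monotone_pvarSum (n : ℕ) : Monotone fun u => pvarSum T π S p u n := fun u v huv => by
  simp only [← measureReal_Iic_pvarMeasure]
  exact measureReal_mono (Iic_subset_Iic.2 huv)

lemma pvarSum_zero_le (hp : 0 < p) {n : ℕ} {c : ℝ} (hc : 0 ≤ c)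
    (hw : ∀ i < π.N n, |S (π.t n (i + 1)) - S (π.t n i)| ^ p ≤ c) :
    pvarSum T π S p 0 n ≤ c := by
  set P : ℕ → Prop := fun i => π.t n i ≤ 0 ∧ 0 < π.t n (i + 1)
  have hcard : (Finset.filter P (Finset.range (π.N n))).card ≤ 1 := by
    refine Finset.card_le_one.2 fun i hi j hj => ?_
    have hPi := (Finset.mem_filter.1 hi).2
    have hPj := (Finset.mem_filter.1 hj).2
    rcases lt_trichotomy i j with hij | rfl | hji
    · linarith [hPi.2, hPj.1, π.mono n (show i + 1 ≤ j from hij)]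
    · rfl
    · linarith [hPj.2, hPi.1, π.mono n (show j + 1 ≤ i from hji)]
  calc pvarSum T π S p 0 n
      ≤ ∑ i ∈ Finset.range (π.N n), if P i then |S (π.t n (i + 1)) - S (π.t n i)| ^ p else 0 := by
        refine Finset.sum_le_sum fun i _ => ?_
        by_cases h₀ : π.t n i ≤ 0
        · by_cases h₁ : 0 < π.t n (i + 1)
          · simp [P, h₀, h₁]
          · have h₀' : π.t n i = 0 := le_antisymm h₀ (π.t_nonneg n i)
            have h₁' : π.t n (i + 1) = 0 := le_antisymm (not_lt.1 h₁) (π.t_nonneg n (i + 1))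
            simp [P, h₀', h₁', Real.zero_rpow hp.ne']
        · simp [P, h₀]
    _ = ∑ i ∈ Finset.filter P (Finset.range (π.N n)), |S (π.t n (i + 1)) - S (π.t n i)| ^ p :=
        (Finset.sum_filter _ _).symm
    _ ≤ (Finset.filter P (Finset.range (π.N n))).card • c := Finset.sum_le_card_nsmul _ _ _
        fun i hi => hw i (Finset.mem_range.1 (Finset.mem_filter.1 hi).1)
    _ ≤ c := by simpa using nsmul_le_nsmul_left hc hcard

lemma tendsto_pvarSum_zero (hp : 0 < p) (hosc : oscVanishes T π S) :
    Tendsto (pvarSum T π S p 0) atTop (𝓝 0) := by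
  refine tendsto_order.2 ⟨fun c hc => Eventually.of_forall fun n => ?_, fun c hc => ?_⟩
  · rw [← measureReal_Iic_pvarMeasure]
    exact hc.trans_le measureReal_nonneg
  obtain ⟨n₀, hn₀⟩ := hosc ((c / 2) ^ p⁻¹) (by positivity)
  refine eventually_atTop.2 ⟨n₀, fun n hn =>
    (pvarSum_zero_le hp (by positivity) fun i hi => ?_).trans_lt (half_lt_self hc)⟩
  calc |S (π.t n (i + 1)) - S (π.t n i)| ^ p ≤ ((c / 2) ^ p⁻¹) ^ p :=
        Real.rpow_le_rpow (abs_nonneg _) (hn₀ n hn i hi _ ⟨le_rfl, π.mono n i.le_succ⟩ _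
          ⟨π.mono n i.le_succ, le_rfl⟩) hp.le
    _ = c / 2 := Real.rpow_inv_rpow (by positivity) hp.ne'

lemma HasWeakPthVariation.exists_continuous_tendsto_pvarSum
    (h : HasWeakPthVariation T π S p) :
    ∃ V : ℝ → ℝ, Continuous V ∧ ∀ u, Tendsto (pvarSum T π S p u) atTop (𝓝 (V u)) := by
  obtain ⟨μ, _, hatom, hconv⟩ := h
  have : NullSingletonClass μ := ⟨hatom⟩
  refine ⟨fun u => μ.real (Iic u), continuous_measureReal_Iic μ, fun u => ?_⟩
  simpa only [measureReal_Iic_pvarMeasure] using tendsto_measureReal_Iic_of_tendsto_integral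
    (μs := pvarMeasure T π S p) (fun g => by simpa only [integral_pvarMeasure] using hconv g) u

lemma hasWeakPthVariation_of_tendsto_pvarSum (hT : 0 ≤ T) (hp : 0 < p)
    (hosc : oscVanishes T π S) {V : ℝ → ℝ} (hV : ContinuousOn V (Icc 0 T))
    (hconv : ∀ u ∈ Icc 0 T, Tendsto (pvarSum T π S p u) atTop (𝓝 (V u))) :
    HasWeakPthVariation T π S p := by
  have hV0 : V 0 = 0 :=
    tendsto_nhds_unique (hconv 0 ⟨le_rfl, hT⟩) (tendsto_pvarSum_zero hp hosc)
  have hmono : MonotoneOn V (Icc 0 T) := fun x hx y hy hxy =>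
    le_of_tendsto_of_tendsto' (hconv x hx) (hconv y hy) fun n => monotone_pvarSum n hxy
  obtain ⟨μ, _, hatom, hsupp, hμ⟩ := exists_measure_Iic_eq_sub hT hmono hV
  refine ⟨μ, inferInstance, hatom.measure_singleton, fun g => ?_⟩
  simpa only [integral_pvarMeasure] using tendsto_integral_of_tendsto_measureReal_Iic hT
    pvarMeasure_compl_Icc hsupp (fun u hu => by
      simpa only [measureReal_Iic_pvarMeasure, hμ u hu, hV0, sub_zero] using hconv u hu) g

end pvarMeasure

theorem pth_variation_iff_pointwise_and_uniform_general
    (T p : ℝ) (hT : 0 < T) (hp : 0 < p)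
    (π : PartitionSeq T) (S : ℝ → ℝ)
    (hosc : oscVanishes T π S) :
    (HasWeakPthVariation T π S p ↔
      ∃ V : ℝ → ℝ, ContinuousOn V (Set.Icc 0 T) ∧
        ∀ u ∈ Set.Icc (0:ℝ) T, Tendsto (pvarSum T π S p u) atTop (𝓝 (V u))) ∧
    (HasWeakPthVariation T π S p →
      ∃ V : ℝ → ℝ, ContinuousOn V (Set.Icc 0 T) ∧
        TendstoUniformlyOn (fun n u => pvarSum T π S p u n) V atTop (Set.Icc 0 T)) := by
  refine ⟨⟨fun h => ?_, fun ⟨V, hV, hconv⟩ =>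
    hasWeakPthVariation_of_tendsto_pvarSum hT.le hp hosc hV hconv⟩, fun h => ?_⟩ <;>
    obtain ⟨V, hV, hconv⟩ := h.exists_continuous_tendsto_pvarSum
  · exact ⟨V, hV.continuousOn, fun u _ => hconv u⟩
  · exact ⟨V, hV.continuousOn, tendstoUniformlyOn_Icc_of_monotoneOn
      (fun n => (monotone_pvarSum n).monotoneOn _) hV.continuousOn fun u _ => hconv u⟩

/-- `S ∈ V_p(π)` (weak convergence of the discrete measures to an atomless measure) iff the
partial sums of `p`-th powers of increments converge pointwise to a continuous function
`[S]^p`; moreover in that case the convergence is uniform on `[0,T]`. -/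
theorem pth_variation_iff_pointwise_and_uniform
    (T p : ℝ) (hT : 0 < T) (hp : 0 < p)
    (π : PartitionSeq T) (S : ℝ → ℝ)
    (hS : ContinuousOn S (Set.Icc 0 T))
    (hosc : oscVanishes T π S) :
    (HasWeakPthVariation T π S p ↔
      ∃ V : ℝ → ℝ, ContinuousOn V (Set.Icc 0 T) ∧
        ∀ u ∈ Set.Icc (0:ℝ) T, Tendsto (pvarSum T π S p u) atTop (𝓝 (V u))) ∧
    (HasWeakPthVariation T π S p →
      ∃ V : ℝ → ℝ, ContinuousOn V (Set.Icc 0 T) ∧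
        TendstoUniformlyOn (fun n u => pvarSum T π S p u n) V atTop (Set.Icc 0 T)) :=
  pth_variation_iff_pointwise_and_uniform_general T p hT hp π S hosc
end

section
/- For 0 < β ≤ α < 1 and f(x) = |x|^α, the left Caputo fractional derivative of order β of f with base point a ≠ 0 satisfies C_{a⁺}^β f(a) = 0 (i.e. the limit as x → a⁺ of C_{a⁺}^β f(x) is 0) whenever β < α or a ≠ 0, while for base point a = 0 and β = α one has lim_{x→0⁺} C_{0⁺}^α f(x) = Γ(α+1). -/
open Filter Topology MeasureTheory intervalIntegral

/-- Left Caputo fractional derivative of order `β ∈ (0,1)` with base point `a`: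
`C_{a⁺}^β f(x) = d/dx ( (1/Γ(1-β)) ∫_a^x (f(t) - f(a)) (x-t)^{-β} dt )`. -/
noncomputable def caputo (β a : ℝ) (f : ℝ → ℝ) (x : ℝ) : ℝ :=
  deriv (fun y => (Real.Gamma (1 - β))⁻¹ * ∫ t in a..y, (f t - f a) * (y - t) ^ (-β)) x

/-!
The substitution `t = a + (y - a) s` writes the Caputo primitive as `(y - a) ^ (1 - β) * Ψ y` with
`Ψ y = ∫₀¹ (f (a + (y - a) s) - f a) (1 - s) ^ (-β) ds`.

For `f = |·| ^ α` and `a = 0`, `Ψ y` is `y ^ α` times a Beta integral, which gives the classical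
formula `C_{0⁺}^β |x| ^ α = Γ(α + 1) / Γ(α + 1 - β) * x ^ (α - β)`: it tends to `0` when `β < α`
and is the constant `Γ(α + 1)` when `β = α`.

For `a ≠ 0`, `f` is `C¹` near `a`. If `|f'| ≤ M` there, then `|Ψ y| ≤ M (y - a) / (1 - β)` and,
differentiating under the integral, `|Ψ' y| ≤ M / (1 - β)`, so the Caputo derivative is
`O((x - a) ^ (1 - β))` as `x → a⁺`.
-/

open Set
open scoped Interval

theorem integral_rpow_mul_one_sub_rpow {u v : ℝ} (hu : 0 < u) (hv : 0 < v) :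
    ∫ s in (0 : ℝ)..1, s ^ (u - 1) * (1 - s) ^ (v - 1) = ProbabilityTheory.beta u v := by
  have hcomplex : (∫ s in (0 : ℝ)..1, s ^ (u - 1) * (1 - s) ^ (v - 1) : ℝ)
      = Complex.betaIntegral u v := by
    rw [Complex.betaIntegral, ← intervalIntegral.integral_ofReal]
    refine intervalIntegral.integral_congr fun s hs => ?_
    rw [uIcc_of_le zero_le_one] at hs
    push_cast
    rw [Complex.ofReal_cpow hs.1, Complex.ofReal_cpow (sub_nonneg.2 hs.2)]
    push_cast
    ring
  rw [ProbabilityTheory.beta_eq_betaIntegralReal u v hu hv, ← hcomplex, Complex.ofReal_re]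

theorem integral_one_sub_rpow_neg {β : ℝ} (hβ : β < 1) :
    ∫ s in (0 : ℝ)..1, (1 - s) ^ (-β) = (1 - β)⁻¹ := by
  rw [intervalIntegral.integral_comp_sub_left (fun s => s ^ (-β)), sub_self, sub_zero,
    integral_rpow (Or.inl (by linarith)), Real.one_rpow,
    Real.zero_rpow (by linarith : -β + 1 ≠ 0)]
  ring

theorem intervalIntegrable_one_sub_rpow_neg {β : ℝ} (hβ : β < 1) :
    IntervalIntegrable (fun s : ℝ => (1 - s) ^ (-β)) volume 0 1 := by
  simpa using ((intervalIntegral.intervalIntegrable_rpow' (a := 0) (b := 1) (r := -β)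
    (by linarith)).comp_sub_left 1).symm

theorem integral_mul_sub_rpow_neg (g : ℝ → ℝ) {β a y : ℝ} (hay : a < y) :
    ∫ t in a..y, g t * (y - t) ^ (-β)
      = (y - a) ^ (1 - β) * ∫ s in (0 : ℝ)..1, g (a + (y - a) * s) * (1 - s) ^ (-β) := by
  have hya : 0 < y - a := sub_pos.2 hay
  have hsubst := intervalIntegral.mul_integral_comp_add_mul (a := 0) (b := 1)
    (f := fun t => g t * (y - t) ^ (-β)) (c := y - a) (d := a)
  simp only [mul_zero, add_zero, mul_one, add_sub_cancel] at hsubst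
  rw [← hsubst, Real.rpow_sub hya, Real.rpow_one, ← intervalIntegral.integral_const_mul,
    ← intervalIntegral.integral_const_mul]
  refine intervalIntegral.integral_congr fun s hs => ?_
  rw [uIcc_of_le zero_le_one] at hs
  have hkernel : y - (a + (y - a) * s) = (y - a) * (1 - s) := by ring
  rw [hkernel, Real.mul_rpow hya.le (sub_nonneg.2 hs.2), Real.rpow_neg hya.le]
  field_simp

theorem integral_abs_rpow_mul_sub_rpow {α β y : ℝ} (hα : 0 < α) (hβ : β < 1) (hy : 0 < y) :
    ∫ t in (0 : ℝ)..y, (|t| ^ α - |(0 : ℝ)| ^ α) * (y - t) ^ (-β)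
      = ProbabilityTheory.beta (α + 1) (1 - β) * y ^ (α + 1 - β) := by
  have hscaled : ∫ s in (0 : ℝ)..1, (|0 + (y - 0) * s| ^ α - |(0 : ℝ)| ^ α) * (1 - s) ^ (-β)
      = y ^ α * ∫ s in (0 : ℝ)..1, s ^ (α + 1 - 1) * (1 - s) ^ (1 - β - 1) := by
    rw [← intervalIntegral.integral_const_mul]
    refine intervalIntegral.integral_congr fun s hs => ?_
    rw [uIcc_of_le zero_le_one] at hs
    simp only [zero_add, sub_zero, abs_zero, Real.zero_rpow hα.ne', add_sub_cancel_right,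
      sub_sub_cancel_left, abs_of_nonneg (mul_nonneg hy.le hs.1), Real.mul_rpow hy.le hs.1]
    ring
  rw [integral_mul_sub_rpow_neg _ hy, hscaled, integral_rpow_mul_one_sub_rpow (by linarith)
    (by linarith), show α + 1 - β = α + (1 - β) by ring, Real.rpow_add hy, sub_zero]
  ring

theorem caputo_base_zero_abs_rpow {α β x : ℝ} (hα : 0 < α) (hβ : β < 1) (hx : 0 < x) :
    caputo β 0 (fun t => |t| ^ α) x
      = Real.Gamma (α + 1) / Real.Gamma (α + 1 - β) * x ^ (α - β) := by
  have hγ : 0 < α + 1 - β := by linarith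
  have hprimitive : (fun y => (Real.Gamma (1 - β))⁻¹ *
        ∫ t in (0 : ℝ)..y, (|t| ^ α - |(0 : ℝ)| ^ α) * (y - t) ^ (-β))
      =ᶠ[𝓝 x] fun y => (Real.Gamma (1 - β))⁻¹ *
        (ProbabilityTheory.beta (α + 1) (1 - β) * y ^ (α + 1 - β)) := by
    filter_upwards [Ioi_mem_nhds hx] with y hy
    rw [integral_abs_rpow_mul_sub_rpow hα hβ hy]
  have hderiv := ((Real.hasDerivAt_rpow_const (p := α + 1 - β) (Or.inl hx.ne')).const_mul
    (ProbabilityTheory.beta (α + 1) (1 - β))).const_mul (Real.Gamma (1 - β))⁻¹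
  rw [caputo, hprimitive.deriv_eq, hderiv.deriv, ProbabilityTheory.beta,
    show α + 1 + (1 - β) = (α + 1 - β) + 1 by ring, Real.Gamma_add_one hγ.ne',
    show α + 1 - β - 1 = α - β by ring]
  have hΓβ := (Real.Gamma_pos_of_pos (by linarith : 0 < 1 - β)).ne'
  have hΓγ := (Real.Gamma_pos_of_pos hγ).ne'
  field_simp

section DerivBound

variable {f : ℝ → ℝ} {a b x y M β : ℝ}

theorem abs_sub_le_mul_of_norm_deriv_le (hf : ∀ t ∈ Ico a b, DifferentiableAt ℝ f t)
    (hM : ∀ t ∈ Ico a b, ‖deriv f t‖ ≤ M) {u : ℝ} (hu : u ∈ Ico a b) :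
    |f u - f a| ≤ M * (u - a) := by
  have := (convex_Ico a b).norm_image_sub_le_of_norm_deriv_le hf hM
    (left_mem_Ico.2 (hu.1.trans_lt hu.2)) hu
  rwa [Real.norm_eq_abs, Real.norm_eq_abs, abs_of_nonneg (sub_nonneg.2 hu.1)] at this

theorem add_sub_mul_mem_Ico {s : ℝ} (hy : y ∈ Ioo a b) (hs : s ∈ Ι (0 : ℝ) 1) :
    a + (y - a) * s ∈ Ico a b := by
  rw [uIoc_of_le zero_le_one] at hs
  have := mul_pos (sub_pos.2 hy.1) hs.1
  have := mul_le_mul_of_nonneg_left hs.2 (sub_pos.2 hy.1).le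
  constructor <;> linarith [hy.2]

theorem one_sub_rpow_nonneg {s : ℝ} (hs : s ∈ Ι (0 : ℝ) 1) : 0 ≤ (1 - s) ^ (-β) :=
  Real.rpow_nonneg (sub_nonneg.2 (uIoc_of_le (zero_le_one (α := ℝ)) ▸ hs).2) _

theorem norm_sub_mul_one_sub_rpow_le (hf : ∀ t ∈ Ico a b, DifferentiableAt ℝ f t)
    (hM : ∀ t ∈ Ico a b, ‖deriv f t‖ ≤ M) (hx : x ∈ Ioo a b) {s : ℝ} (hs : s ∈ Ι (0 : ℝ) 1) :
    ‖(f (a + (x - a) * s) - f a) * (1 - s) ^ (-β)‖ ≤ M * (x - a) * (1 - s) ^ (-β) := by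
  have hlip := abs_sub_le_mul_of_norm_deriv_le hf hM (add_sub_mul_mem_Ico hx hs)
  rw [Real.norm_eq_abs, abs_mul, abs_of_nonneg (one_sub_rpow_nonneg hs)]
  refine mul_le_mul_of_nonneg_right ?_ (one_sub_rpow_nonneg hs)
  have hM0 : 0 ≤ M := (norm_nonneg _).trans (hM a (left_mem_Ico.2 (hx.1.trans hx.2)))
  rw [uIoc_of_le zero_le_one] at hs
  calc |f (a + (x - a) * s) - f a| ≤ M * ((x - a) * s) := by rwa [add_sub_cancel_left] at hlip
    _ ≤ M * (x - a) := by gcongr; nlinarith [hs.2, hx.1]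

theorem norm_deriv_mul_mul_one_sub_rpow_le (hM : ∀ t ∈ Ico a b, ‖deriv f t‖ ≤ M)
    (hy : y ∈ Ioo a b) {s : ℝ} (hs : s ∈ Ι (0 : ℝ) 1) :
    ‖deriv f (a + (y - a) * s) * s * (1 - s) ^ (-β)‖ ≤ M * (1 - s) ^ (-β) := by
  have hM0 : 0 ≤ M := (norm_nonneg _).trans (hM a (left_mem_Ico.2 (hy.1.trans hy.2)))
  have hs' : s ∈ Ioc 0 1 := uIoc_of_le (zero_le_one (α := ℝ)) ▸ hs
  rw [norm_mul, norm_mul, Real.norm_of_nonneg (one_sub_rpow_nonneg hs),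
    Real.norm_of_nonneg hs'.1.le]
  refine mul_le_mul_of_nonneg_right ?_ (one_sub_rpow_nonneg hs)
  simpa using mul_le_mul (hM _ (add_sub_mul_mem_Ico hy hs)) hs'.2 hs'.1.le hM0

theorem hasDerivAt_integral_sub_mul_one_sub_rpow (hβ : β < 1)
    (hf : ∀ t ∈ Ico a b, DifferentiableAt ℝ f t) (hM : ∀ t ∈ Ico a b, ‖deriv f t‖ ≤ M)
    (hx : x ∈ Ioo a b) :
    HasDerivAt (fun y => ∫ s in (0 : ℝ)..1, (f (a + (y - a) * s) - f a) * (1 - s) ^ (-β))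
      (∫ s in (0 : ℝ)..1, deriv f (a + (x - a) * s) * s * (1 - s) ^ (-β)) x := by
  have hkernel : Measurable fun s : ℝ => (1 - s) ^ (-β) := by fun_prop
  have hF_meas : ∀ y ∈ Ioo a b, AEStronglyMeasurable
      (fun s => (f (a + (y - a) * s) - f a) * (1 - s) ^ (-β)) (volume.restrict (Ι 0 1)) := by
    intro y hy
    have hcont : ContinuousOn (fun s => f (a + (y - a) * s)) (Ι 0 1) :=
      ContinuousOn.comp (fun t ht => (hf t ht).continuousAt.continuousWithinAt)
        (by fun_prop) fun s hs => add_sub_mul_mem_Ico hy hs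
    exact ((hcont.sub continuousOn_const).aestronglyMeasurable measurableSet_uIoc).mul
      hkernel.aestronglyMeasurable
  refine (intervalIntegral.hasDerivAt_integral_of_dominated_loc_of_deriv_le
    (F' := fun y s => deriv f (a + (y - a) * s) * s * (1 - s) ^ (-β))
    (bound := fun s => M * (1 - s) ^ (-β)) (Ioo_mem_nhds hx.1 hx.2)
    (eventually_of_mem (Ioo_mem_nhds hx.1 hx.2) hF_meas) ?_ ?_
    (ae_of_all _ fun s hs y hy => norm_deriv_mul_mul_one_sub_rpow_le hM hy hs)
    ((intervalIntegrable_one_sub_rpow_neg hβ).const_mul M) ?_).2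
  · exact ((intervalIntegrable_one_sub_rpow_neg hβ).const_mul (M * (x - a))).mono_fun'
      (hF_meas x hx) ((ae_restrict_iff' measurableSet_uIoc).2 (ae_of_all _
        fun s hs => norm_sub_mul_one_sub_rpow_le hf hM hx hs))
  · exact ((((measurable_deriv f).comp (by fun_prop)).mul measurable_id).mul
      hkernel).aestronglyMeasurable
  · refine ae_of_all _ fun s hs y hy => ?_
    have hinner : HasDerivAt (fun y => a + (y - a) * s) s y := by
      simpa using (((hasDerivAt_id y).sub_const a).mul_const s).const_add a
    exact (((hf _ (add_sub_mul_mem_Ico hy hs)).hasDerivAt.comp y hinner).sub_const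
      (f a)).mul_const _

theorem caputo_eq_of_hasDerivAt {Ψ' : ℝ} (hx : a < x)
    (hΨ : HasDerivAt (fun y => ∫ s in (0 : ℝ)..1, (f (a + (y - a) * s) - f a) * (1 - s) ^ (-β))
      Ψ' x) :
    caputo β a f x = (Real.Gamma (1 - β))⁻¹ * ((1 - β) * (x - a) ^ (-β) *
        (∫ s in (0 : ℝ)..1, (f (a + (x - a) * s) - f a) * (1 - s) ^ (-β))
      + (x - a) ^ (1 - β) * Ψ') := by
  have hpow : HasDerivAt (fun y => (y - a) ^ (1 - β)) ((1 - β) * (x - a) ^ (-β)) x := by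
    convert ((hasDerivAt_id' x).sub_const a).rpow_const (p := 1 - β) (Or.inl (sub_pos.2 hx).ne')
      using 1
    rw [one_mul, sub_sub_cancel_left]
  have hprimitive : (fun y => (Real.Gamma (1 - β))⁻¹ * ∫ t in a..y, (f t - f a) * (y - t) ^ (-β))
      =ᶠ[𝓝 x] fun y => (Real.Gamma (1 - β))⁻¹ * ((y - a) ^ (1 - β) *
        ∫ s in (0 : ℝ)..1, (f (a + (y - a) * s) - f a) * (1 - s) ^ (-β)) := by
    filter_upwards [Ioi_mem_nhds hx] with y hy
    rw [integral_mul_sub_rpow_neg _ hy]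
  rw [caputo, hprimitive.deriv_eq]
  exact ((hpow.mul hΨ).const_mul _).deriv

theorem abs_caputo_le (hβ : β < 1) (hf : ∀ t ∈ Ico a b, DifferentiableAt ℝ f t)
    (hM : ∀ t ∈ Ico a b, ‖deriv f t‖ ≤ M) (hx : x ∈ Ioo a b) :
    |caputo β a f x| ≤ (2 - β) / Real.Gamma (2 - β) * M * (x - a) ^ (1 - β) := by
  have hxa : 0 < x - a := sub_pos.2 hx.1
  have hI : ∀ s ∈ Ioc (0 : ℝ) 1, s ∈ Ι (0 : ℝ) 1 := fun s hs => by rwa [uIoc_of_le zero_le_one]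
  have hkernel : ∀ c : ℝ, ∫ s in (0 : ℝ)..1, c * (1 - s) ^ (-β) = c * (1 - β)⁻¹ := fun c => by
    rw [intervalIntegral.integral_const_mul, integral_one_sub_rpow_neg hβ]
  have hΨ := norm_integral_le_of_norm_le zero_le_one
    (ae_of_all _ fun s hs => norm_sub_mul_one_sub_rpow_le hf hM hx (hI s hs))
    ((intervalIntegrable_one_sub_rpow_neg hβ).const_mul (M * (x - a)))
  have hΨ' := norm_integral_le_of_norm_le zero_le_one
    (ae_of_all _ fun s hs => norm_deriv_mul_mul_one_sub_rpow_le hM hx (hI s hs))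
    ((intervalIntegrable_one_sub_rpow_neg hβ).const_mul M)
  rw [hkernel, Real.norm_eq_abs] at hΨ hΨ'
  have hΓ : 0 < Real.Gamma (1 - β) := Real.Gamma_pos_of_pos (by linarith)
  have hΓ2 : Real.Gamma (2 - β) = (1 - β) * Real.Gamma (1 - β) := by
    rw [show 2 - β = (1 - β) + 1 by ring, Real.Gamma_add_one (by linarith)]
  have hpow : (x - a) ^ (1 - β) = (x - a) ^ (-β) * (x - a) := by
    rw [← Real.rpow_add_one hxa.ne', neg_add_eq_sub]
  rw [caputo_eq_of_hasDerivAt hx.1 (hasDerivAt_integral_sub_mul_one_sub_rpow hβ hf hM hx)]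
  calc _ ≤ (Real.Gamma (1 - β))⁻¹ * ((1 - β) * (x - a) ^ (-β) * (M * (x - a) * (1 - β)⁻¹)
          + (x - a) ^ (1 - β) * (M * (1 - β)⁻¹)) := by
        rw [abs_mul, abs_of_pos (inv_pos.2 hΓ)]
        gcongr
        refine (abs_add_le _ _).trans (add_le_add ?_ ?_)
        · rw [abs_mul, abs_of_nonneg (by positivity)]
          gcongr
        · rw [abs_mul, abs_of_nonneg (by positivity)]
          gcongr
    _ = (2 - β) / Real.Gamma (2 - β) * M * (x - a) ^ (1 - β) := by
        rw [hΓ2, hpow]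
        field_simp
        ring

end DerivBound

theorem tendsto_sub_rpow_nhdsGT {a p : ℝ} (hp : 0 < p) :
    Tendsto (fun x => (x - a) ^ p) (𝓝[>] a) (𝓝 0) := by
  have hcont : ContinuousAt (fun x => (x - a) ^ p) a :=
    (continuousAt_id.sub continuousAt_const).rpow_const (Or.inr hp.le)
  simpa [Real.zero_rpow hp.ne'] using hcont.tendsto.mono_left nhdsWithin_le_nhds

section ContDiff

variable {f : ℝ → ℝ} {a β : ℝ}

theorem caputo_isBigO_of_contDiffAt (hβ : β < 1) (hf : ContDiffAt ℝ 1 f a) :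
    caputo β a f =O[𝓝[>] a] fun x => (x - a) ^ (1 - β) := by
  have hderiv : ContinuousAt (deriv f) a :=
    (hf.continuousAt_fderiv one_ne_zero).clm_apply continuousAt_const
  have hnear : ∀ᶠ t in 𝓝 a, DifferentiableAt ℝ f t ∧ ‖deriv f t‖ ≤ ‖deriv f a‖ + 1 :=
    ((hf.eventually (by simp)).mono fun t ht => ht.differentiableAt one_ne_zero).and
      ((hderiv.norm.eventually (gt_mem_nhds (lt_add_one _))).mono fun _ ht => ht.le)
  obtain ⟨δ, hδ, hball⟩ := Metric.eventually_nhds_iff.1 hnear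
  have hIco : ∀ t ∈ Ico a (a + δ), dist t a < δ := fun t ht => by
    rw [Real.dist_eq, abs_lt]
    constructor <;> linarith [ht.1, ht.2]
  refine Asymptotics.IsBigO.of_bound ((2 - β) / Real.Gamma (2 - β) * (‖deriv f a‖ + 1)) ?_
  filter_upwards [Ioo_mem_nhdsGT (show a < a + δ by linarith)] with x hx
  rw [Real.norm_eq_abs, Real.norm_of_nonneg (Real.rpow_nonneg (sub_pos.2 hx.1).le _)]
  exact abs_caputo_le hβ (fun t ht => (hball (hIco t ht)).1) (fun t ht => (hball (hIco t ht)).2) hx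

theorem tendsto_caputo_nhdsGT_of_contDiffAt (hβ : β < 1) (hf : ContDiffAt ℝ 1 f a) :
    Tendsto (caputo β a f) (𝓝[>] a) (𝓝 0) :=
  (caputo_isBigO_of_contDiffAt hβ hf).trans_tendsto (tendsto_sub_rpow_nhdsGT (by linarith))

end ContDiff

/-- For `f(x) = |x|^α` with `0 < β ≤ α < 1`: the left local fractional derivative of order `β`
at base point `a` vanishes whenever `β < α` or `a ≠ 0`, while for base point `0` and `β = α`
one has `lim_{x→0⁺} C_{0⁺}^α f(x) = Γ(α+1)`. -/
theorem caputo_abs_rpow (α β : ℝ) (hβ : 0 < β) (hβα : β ≤ α) (hα : α < 1) :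
    (∀ a : ℝ, (β < α ∨ a ≠ 0) →
      Tendsto (caputo β a (fun x => |x| ^ α)) (𝓝[>] a) (𝓝 0)) ∧
    Tendsto (caputo α 0 (fun x => |x| ^ α)) (𝓝[>] 0) (𝓝 (Real.Gamma (α + 1))) := by
  have hα0 : 0 < α := hβ.trans_le hβα
  have hβ1 : β < 1 := hβα.trans_lt hα
  refine ⟨fun a ha => ?_, ?_⟩
  · rcases eq_or_ne a 0 with rfl | ha0
    · have hpow := (tendsto_sub_rpow_nhdsGT (a := 0)
        (sub_pos.2 (ha.resolve_right (not_not.2 rfl)))).const_mul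
        (Real.Gamma (α + 1) / Real.Gamma (α + 1 - β))
      rw [mul_zero] at hpow
      refine hpow.congr' ?_
      filter_upwards [self_mem_nhdsWithin] with x hx
      rw [caputo_base_zero_abs_rpow hα0 hβ1 hx, sub_zero]
    · exact tendsto_caputo_nhdsGT_of_contDiffAt hβ1
        ((contDiffAt_abs ha0).rpow_const_of_ne (abs_ne_zero.2 ha0))
  · refine tendsto_const_nhds.congr' ?_
    filter_upwards [self_mem_nhdsWithin] with x hx
    rw [caputo_base_zero_abs_rpow hα0 hα hx, sub_self, add_sub_cancel_left, Real.Gamma_one, div_one,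
      Real.rpow_zero, mul_one]
end

section
/- Let 0 < p < 1 and let f : [a,b] → ℝ be continuous. Suppose that for every x ∈ [a,b] the limit g(x) := lim_{y→x, y>x} (f(y) - f(x))/(y-x)^p exists. Then g(x) = 0 for Lebesgue-almost every x ∈ [a,b]. -/
/-!
At a point where the right fractional derivative `g x` is positive, `f` grows at least like
`c * (y - x) ^ p` to the right of `x`. Such points are covered by countably many sets on each of
which `f` increases like this between any two of its points. On such a set `f` is monotone, hence
differentiable within the set at almost every point (Lebesgue), while at every point which is not
isolated on the right in the set the difference quotients are at least `c * (y - x) ^ (p - 1)`,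
which blows up since `p < 1`. So the set is null. Applying this to `-f` handles `g x < 0`.
-/

open Filter Topology MeasureTheory Set

lemma tendsto_sub_rpow_nhdsGT_atTop {p : ℝ} (hp : p < 0) (x : ℝ) :
    Tendsto (fun y : ℝ => (y - x) ^ p) (𝓝[>] x) atTop := by
  have hsub : Tendsto (fun y : ℝ => y - x) (𝓝[>] x) (𝓝[>] 0) :=
    tendsto_nhdsWithin_of_tendsto_nhds_of_eventually_within _
      (tendsto_sub_nhds_zero_iff.2 tendsto_id |>.mono_left nhdsWithin_le_nhds)
      (eventually_nhdsWithin_of_forall fun y hy => mem_Ioi.2 (sub_pos.2 hy))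
  exact (tendsto_rpow_neg_nhdsGT_zero hp).comp hsub

section RpowGrowth

variable {p c : ℝ} {f : ℝ → ℝ} {s : Set ℝ}

lemma mul_rpow_sub_one_le_slope (hs : ∀ x ∈ s, ∀ y ∈ s, x < y → c * (y - x) ^ p ≤ f y - f x)
    {x y : ℝ} (hx : x ∈ s) (hy : y ∈ s) (hxy : x < y) :
    c * (y - x) ^ (p - 1) ≤ slope f x y := by
  have hpos : 0 < y - x := sub_pos.2 hxy
  rw [slope_def_field, Real.rpow_sub_one hpos.ne', ← mul_div_assoc]
  exact div_le_div_of_nonneg_right (hs x hx y hy hxy) hpos.le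

lemma monotoneOn_of_mul_rpow_le_sub (hc : 0 < c)
    (hs : ∀ x ∈ s, ∀ y ∈ s, x < y → c * (y - x) ^ p ≤ f y - f x) : MonotoneOn f s := by
  intro x hx y hy hxy
  rcases hxy.eq_or_lt with rfl | hlt
  · rfl
  have hgrowth := hs x hx y hy hlt
  have hnonneg : 0 ≤ c * (y - x) ^ p := mul_nonneg hc.le (Real.rpow_nonneg (sub_nonneg.2 hxy) _)
  linarith

lemma not_differentiableWithinAt_of_mul_rpow_le_sub (hp : p < 1) (hc : 0 < c)
    (hs : ∀ x ∈ s, ∀ y ∈ s, x < y → c * (y - x) ^ p ≤ f y - f x) {x : ℝ} (hx : x ∈ s)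
    (hacc : (𝓝[s ∩ Ioi x] x).NeBot) : ¬ DifferentiableWithinAt ℝ f s x := by
  intro hd
  have hslope : Tendsto (slope f x) (𝓝[s ∩ Ioi x] x) (𝓝 (derivWithin f s x)) :=
    (hasDerivWithinAt_iff_tendsto_slope.1 hd.hasDerivWithinAt).mono_left
      (nhdsWithin_mono _ fun y hy => ⟨hy.1, ne_of_gt hy.2⟩)
  have hblowup : Tendsto (fun y => c * (y - x) ^ (p - 1)) (𝓝[s ∩ Ioi x] x) atTop :=
    ((tendsto_sub_rpow_nhdsGT_atTop (by linarith) x).const_mul_atTop hc).mono_left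
      (nhdsWithin_mono _ inter_subset_right)
  refine not_tendsto_nhds_of_tendsto_atTop (tendsto_atTop_mono' _ ?_ hblowup) _ hslope
  exact eventually_nhdsWithin_of_forall fun y hy => mul_rpow_sub_one_le_slope hs hx hy.1 hy.2

lemma volume_eq_zero_of_mul_rpow_le_sub (hp : p < 1) (hc : 0 < c)
    (hs : ∀ x ∈ s, ∀ y ∈ s, x < y → c * (y - x) ^ p ≤ f y - f x) : volume s = 0 := by
  have hdiff := (monotoneOn_of_mul_rpow_le_sub hc hs).ae_differentiableWithinAt_of_mem
  have hcover : s ⊆ {x | ¬(x ∈ s → DifferentiableWithinAt ℝ f s x)} ∪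
      {x ∈ s | 𝓝[s ∩ Ioi x] x = ⊥} := by
    intro x hx
    by_cases hacc : 𝓝[s ∩ Ioi x] x = ⊥
    · exact Or.inr ⟨hx, hacc⟩
    · have hnd := not_differentiableWithinAt_of_mul_rpow_le_sub hp hc hs hx ⟨hacc⟩
      exact Or.inl fun h => hnd (h hx)
  exact measure_mono_null hcover (measure_union_null (ae_iff.1 hdiff)
    (countable_setOfPred_isolated_right_within.measure_zero volume))

end RpowGrowth

def rightRpowGrowthSet (f : ℝ → ℝ) (p : ℝ) : Set ℝ :=
  {x | ∃ c > 0, ∀ᶠ y in 𝓝[>] x, c * (y - x) ^ p ≤ f y - f x}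

lemma volume_rightRpowGrowthSet {p : ℝ} (hp : p < 1) (f : ℝ → ℝ) :
    volume (rightRpowGrowthSet f p) = 0 := by
  have hcover : rightRpowGrowthSet f p ⊆ ⋃ q ∈ {q : ℚ | 0 < q}, ⋃ t : ℚ,
      {x | x < t ∧ ∀ y ∈ Ioo x (t : ℝ), (q : ℝ) * (y - x) ^ p ≤ f y - f x} := by
    rintro x ⟨c, hc, hev⟩
    obtain ⟨u, hxu, hu⟩ := mem_nhdsGT_iff_exists_Ioo_subset.1 hev
    obtain ⟨q, hq0, hqc⟩ := exists_rat_btwn hc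
    obtain ⟨t, hxt, htu⟩ := exists_rat_btwn (mem_Ioi.1 hxu)
    simp only [mem_iUnion, mem_ofPred_eq, exists_prop]
    refine ⟨q, by exact_mod_cast hq0, t, hxt, fun y hy => ?_⟩
    calc (q : ℝ) * (y - x) ^ p ≤ c * (y - x) ^ p :=
          mul_le_mul_of_nonneg_right hqc.le (Real.rpow_nonneg (sub_nonneg.2 hy.1.le) _)
      _ ≤ f y - f x := hu ⟨hy.1, hy.2.trans htu⟩
  refine measure_mono_null hcover ((measure_biUnion_null_iff (to_countable _)).2
    fun q hq => measure_iUnion_null fun t => ?_)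
  -- any two points `x < y` of the set satisfy `y < t`, so the growth condition applies to them
  exact volume_eq_zero_of_mul_rpow_le_sub hp (Rat.cast_pos.2 hq)
    fun x hx y hy hxy => hx.2 y ⟨hxy, hy.1⟩

lemma mem_rightRpowGrowthSet_of_tendsto {f : ℝ → ℝ} {p x L : ℝ} (hL : 0 < L)
    (h : Tendsto (fun y => (f y - f x) / (y - x) ^ p) (𝓝[>] x) (𝓝 L)) :
    x ∈ rightRpowGrowthSet f p := by
  refine ⟨L / 2, half_pos hL, ?_⟩
  filter_upwards [h.eventually (lt_mem_nhds (half_lt_self hL)), self_mem_nhdsWithin]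
    with y hy hxy
  exact ((lt_div_iff₀ (Real.rpow_pos_of_pos (sub_pos.2 hxy) _)).1 hy).le

theorem fractional_derivative_ae_zero_general
    (p a b : ℝ) (hp1 : p < 1)
    (f g : ℝ → ℝ)
    (h : ∀ x ∈ Set.Icc a b,
      Tendsto (fun y => (f y - f x) / (y - x) ^ p) (𝓝[>] x) (𝓝 (g x))) :
    ∀ᵐ x ∂(volume.restrict (Set.Icc a b)), g x = 0 := by
  have hneg : ∀ x ∈ Icc a b,
      Tendsto (fun y => ((-f) y - (-f) x) / (y - x) ^ p) (𝓝[>] x) (𝓝 (-g x)) := fun x hx =>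
    (h x hx).neg.congr fun y => by simp only [Pi.neg_apply]; ring
  rw [ae_restrict_iff' measurableSet_Icc, ae_iff]
  refine measure_mono_null ?_ (measure_union_null (volume_rightRpowGrowthSet hp1 f)
    (volume_rightRpowGrowthSet hp1 (-f)))
  intro x hx
  obtain ⟨hx, hgx⟩ := Classical.not_imp.1 hx
  rcases Ne.lt_or_gt hgx with hlt | hgt
  · exact Or.inr (mem_rightRpowGrowthSet_of_tendsto (neg_pos.2 hlt) (hneg x hx))
  · exact Or.inl (mem_rightRpowGrowthSet_of_tendsto hgt (h x hx))

/-- If `0 < p < 1`, `f` is continuous on `[a,b]`, and the right 'classical' fractional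
derivative `g(x) = lim_{y→x⁺} (f(y)-f(x))/(y-x)^p` exists at every point of `[a,b]`, then
`g = 0` Lebesgue-almost everywhere on `[a,b]`. -/
theorem fractional_derivative_ae_zero
    (p a b : ℝ) (hp0 : 0 < p) (hp1 : p < 1) (hab : a ≤ b)
    (f g : ℝ → ℝ) (hf : ContinuousOn f (Set.Icc a b))
    (h : ∀ x ∈ Set.Icc a b,
      Tendsto (fun y => (f y - f x) / (y - x) ^ p) (𝓝[>] x) (𝓝 (g x))) :
    ∀ᵐ x ∂(volume.restrict (Set.Icc a b)), g x = 0 :=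
  fractional_derivative_ae_zero_general p a b hp1 f g h
end

section
/- Let 0 < α < 1 and f : ℝ → ℝ continuous. Define E = { x ∈ ℝ : lim_{y→x, y>x} (f(y)-f(x))/(y-x)^α exists and is nonzero }. Then the Hausdorff dimension of E is at most α. -/
open Filter Topology MeasureTheory
open scoped ENNReal NNReal

/-- Auxiliary lemma: if on a set `S` the function `f` satisfies a reverse Hölder-type
inequality `ε * (y - x) ^ α ≤ |f y - f x|`, then `dimH S ≤ α`, because the inverse
of `f` on `f '' S` is Hölder with exponent `α⁻¹`. -/
lemma aux_dimH_le (α : ℝ) (hα0 : 0 < α) (f : ℝ → ℝ) (ε : ℝ) (hε : 0 < ε) (S : Set ℝ)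
    (h : ∀ x ∈ S, ∀ y ∈ S, x < y → ε * (y - x) ^ α ≤ |f y - f x|) :
    dimH S ≤ ENNReal.ofReal α := by
  -- real inequality: the inverse is Hölder
  have base : ∀ x ∈ S, ∀ y ∈ S, x < y →
      y - x ≤ ε⁻¹ ^ α⁻¹ * |f y - f x| ^ α⁻¹ := by
    intro x hx y hy hlt
    have hd : (0:ℝ) < y - x := sub_pos.2 hlt
    have h1 : (y - x) ^ α ≤ ε⁻¹ * |f y - f x| := by
      rw [inv_mul_eq_div, le_div_iff₀ hε, mul_comm]
      exact h x hx y hy hlt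
    have h2 : ((y - x) ^ α) ^ α⁻¹ ≤ (ε⁻¹ * |f y - f x|) ^ α⁻¹ :=
      Real.rpow_le_rpow (Real.rpow_nonneg hd.le α) h1 (inv_nonneg.2 hα0.le)
    rwa [Real.rpow_rpow_inv hd.le hα0.ne',
      Real.mul_rpow (inv_nonneg.2 hε.le) (abs_nonneg _)] at h2
  have key : ∀ x ∈ S, ∀ y ∈ S,
      |x - y| ≤ ε⁻¹ ^ α⁻¹ * |f x - f y| ^ α⁻¹ := by
    intro x hx y hy
    rcases lt_trichotomy x y with hlt | rfl | hlt
    · rw [abs_sub_comm x y, abs_of_pos (sub_pos.2 hlt), abs_sub_comm (f x) (f y)]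
      exact base x hx y hy hlt
    · simp [Real.rpow_nonneg, mul_nonneg, inv_nonneg.2 hε.le,
        Real.rpow_nonneg (le_refl (0:ℝ))]
    · rw [abs_of_pos (sub_pos.2 hlt)]
      exact base y hy x hx hlt
  have hinj : Set.InjOn f S := by
    intro x hx y hy hfxy
    by_contra hne
    have : |x - y| ≤ ε⁻¹ ^ α⁻¹ * |f x - f y| ^ α⁻¹ := key x hx y hy
    rw [hfxy, sub_self, abs_zero, Real.zero_rpow (inv_ne_zero hα0.ne'), mul_zero,
      abs_nonpos_iff, sub_eq_zero] at this
    exact hne this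
  set φ := Function.invFunOn f S with hφ
  set r : ℝ≥0 := Real.toNNReal α⁻¹ with hr_def
  have hr : 0 < r := Real.toNNReal_pos.2 (inv_pos.2 hα0)
  set C : ℝ≥0 := Real.toNNReal (ε⁻¹ ^ α⁻¹) with hC_def
  have holder : HolderOnWith C r φ (f '' S) := by
    intro z hz w hw
    obtain ⟨x, hx, rfl⟩ := hz
    obtain ⟨y, hy, rfl⟩ := hw
    rw [hφ, hinj.leftInvOn_invFunOn hx, hinj.leftInvOn_invFunOn hy]
    have hcoe : (r : ℝ) = α⁻¹ := Real.coe_toNNReal _ (inv_nonneg.2 hα0.le)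
    rw [edist_dist, edist_dist, Real.dist_eq, Real.dist_eq, hcoe,
      ENNReal.ofReal_rpow_of_nonneg (abs_nonneg _) (inv_nonneg.2 hα0.le)]
    have : (C : ℝ≥0∞) = ENNReal.ofReal (ε⁻¹ ^ α⁻¹) := rfl
    rw [this, ← ENNReal.ofReal_mul (Real.rpow_nonneg (inv_nonneg.2 hε.le) _)]
    exact ENNReal.ofReal_le_ofReal (key x hx y hy)
  have himg : φ '' (f '' S) = S := hinj.invFunOn_image (subset_refl S)
  have h1 : dimH (f '' S) ≤ 1 :=
    (dimH_mono (Set.subset_univ _)).trans_eq Real.dimH_univ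
  calc dimH S = dimH (φ '' (f '' S)) := by rw [himg]
    _ ≤ dimH (f '' S) / r := holder.dimH_image_le hr
    _ ≤ 1 / r := by gcongr
    _ = ENNReal.ofReal α := by
        have : (r : ℝ≥0∞) = (ENNReal.ofReal α)⁻¹ := by
          rw [hr_def, ← ENNReal.ofReal_inv_of_pos hα0]; rfl
        rw [this, one_div, inv_inv]

/-- The set of points where the right 'classical' fractional derivative of order `α` of a
continuous function exists and is nonzero has Hausdorff dimension at most `α`. -/
theorem hausdorff_dim_nonzero_fractional_derivative
    (α : ℝ) (hα0 : 0 < α) (hα1 : α < 1) (f : ℝ → ℝ) (hf : Continuous f) :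
    dimH {x : ℝ | ∃ L : ℝ, L ≠ 0 ∧
        Tendsto (fun y => (f y - f x) / (y - x) ^ α) (𝓝[>] x) (𝓝 L)} ≤
      ENNReal.ofReal α := by
  set T : ℕ → ℤ → Set ℝ := fun n m =>
    {x : ℝ | x ∈ Set.Ico ((m : ℝ) / (n + 1)) (((m : ℝ) + 1) / (n + 1)) ∧
      ∀ y, x < y → y < x + 1 / (n + 1) →
        (1 / ((n : ℝ) + 1)) * (y - x) ^ α ≤ |f y - f x|} with hT
  have hcover : {x : ℝ | ∃ L : ℝ, L ≠ 0 ∧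
      Tendsto (fun y => (f y - f x) / (y - x) ^ α) (𝓝[>] x) (𝓝 L)} ⊆
      ⋃ (n : ℕ) (m : ℤ), T n m := by
    rintro x ⟨L, hL, htend⟩
    have habs : Tendsto (fun y => |f y - f x| / (y - x) ^ α) (𝓝[>] x) (𝓝 |L|) := by
      refine (htend.abs).congr' ?_
      filter_upwards [self_mem_nhdsWithin] with y hy
      have : (0:ℝ) < (y - x) ^ α := Real.rpow_pos_of_pos (sub_pos.2 hy) α
      rw [abs_div, abs_of_pos this]
    have hev : ∀ᶠ y in 𝓝[>] x, |L| / 2 ≤ |f y - f x| / (y - x) ^ α := by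
      have : |L| / 2 < |L| := by
        have := abs_pos.2 hL; linarith
      exact habs.eventually (eventually_ge_nhds this)
    obtain ⟨u, hu, hsub⟩ := mem_nhdsGT_iff_exists_Ioo_subset.1 hev
    have hux : 0 < min (|L| / 2) (u - x) := by
      have h1 : 0 < |L| / 2 := by have := abs_pos.2 hL; linarith
      have h2 : 0 < u - x := sub_pos.2 hu
      exact lt_min h1 h2
    obtain ⟨n, hn⟩ := exists_nat_one_div_lt hux
    have hn1 : (0:ℝ) < (n : ℝ) + 1 := by positivity
    have hnL : 1 / ((n : ℝ) + 1) ≤ |L| / 2 := (hn.trans_le (min_le_left _ _)).le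
    have hnu : 1 / ((n : ℝ) + 1) ≤ u - x := (hn.trans_le (min_le_right _ _)).le
    refine Set.mem_iUnion.2 ⟨n, Set.mem_iUnion.2 ⟨⌊x * ((n : ℝ) + 1)⌋, ?_, ?_⟩⟩
    · constructor
      · rw [div_le_iff₀ hn1]
        exact Int.floor_le _
      · rw [lt_div_iff₀ hn1]
        exact Int.lt_floor_add_one _
    · intro y hxy hylt
      have hy_mem : y ∈ Set.Ioo x u := ⟨hxy, by linarith⟩
      have h2 := hsub hy_mem
      have hpos : (0:ℝ) < (y - x) ^ α := Real.rpow_pos_of_pos (sub_pos.2 hxy) α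
      calc (1 / ((n : ℝ) + 1)) * (y - x) ^ α
          ≤ (|L| / 2) * (y - x) ^ α := by gcongr
        _ ≤ |f y - f x| := (le_div_iff₀ hpos).1 h2
  refine (dimH_mono hcover).trans ?_
  rw [dimH_iUnion]
  refine iSup_le fun n => ?_
  rw [dimH_iUnion]
  refine iSup_le fun m => ?_
  refine aux_dimH_le α hα0 f (1 / ((n : ℝ) + 1)) (by positivity) _ ?_
  intro x hx y hy hlt
  have hn1 : (0:ℝ) < (n : ℝ) + 1 := by positivity
  have hbound : y < x + 1 / ((n : ℝ) + 1) := by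
    have h1 : (m : ℝ) / (n + 1) ≤ x := hx.1.1
    have h2 : y < ((m : ℝ) + 1) / (n + 1) := hy.1.2
    have h3 : ((m : ℝ) + 1) / (n + 1) = (m : ℝ) / (n + 1) + 1 / (n + 1) := by
      rw [add_div]
    linarith
  exact hx.2 y hlt hbound
end

section
/- Let f ∈ C^α([a,b]) be α-Hölder continuous with 0 < α < 1. Then for any 0 < β < α with β ∉ ℕ, if the local fractional derivative f^{(β+)}(x) := lim_{y→x⁺} C_{x⁺}^β f(y) exists at x, then f^{(β+)}(x) = 0. -/
open Filter Topology MeasureTheory intervalIntegral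

/-!
Write `caputo β x f = deriv I` with `I y = Γ(1-β)⁻¹ ∫_x^y (f t - f x) (y - t)^(-β) dt`.
Hölder continuity of order `α` bounds `I y` by a multiple of `(y - x)^(1 + α - β)`, so for
`β < α` we get `I y = o(y - x)` as `y → x⁺`. If `I'` tended to some `L ≠ 0`, then `I` would be
differentiable near `x⁺` and L'Hôpital's rule would give `I y / (y - x) → L`, a contradiction.
-/

open Asymptotics

noncomputable def caputoIntegral (β a : ℝ) (f : ℝ → ℝ) (y : ℝ) : ℝ :=
  (Real.Gamma (1 - β))⁻¹ * ∫ t in a..y, (f t - f a) * (y - t) ^ (-β)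

theorem caputo_eq_deriv_caputoIntegral (β a : ℝ) (f : ℝ → ℝ) :
    caputo β a f = deriv (caputoIntegral β a f) :=
  rfl

theorem eq_zero_of_tendsto_deriv_of_isLittleO {g : ℝ → ℝ} {x L : ℝ}
    (hg : g =o[𝓝[>] x] fun y => y - x) (hlim : Tendsto (deriv g) (𝓝[>] x) (𝓝 L)) :
    L = 0 := by
  by_contra hL
  have hsub : Tendsto (fun y : ℝ => y - x) (𝓝[>] x) (𝓝 0) :=
    tendsto_sub_nhds_zero_iff.2 nhdsWithin_le_nhds
  have hderiv_ne : ∀ᶠ y in 𝓝[>] x, deriv g y ≠ 0 := hlim.eventually_ne hL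
  have hslope : Tendsto (fun y => g y / (y - x)) (𝓝[>] x) (𝓝 L) := by
    refine HasDerivAt.lhopital_zero_nhdsGT (f' := deriv g) (g' := fun _ => 1)
      (hderiv_ne.mono fun y hy => (differentiableAt_of_deriv_ne_zero hy).hasDerivAt)
      (.of_forall fun y => (hasDerivAt_id y).sub_const x) (.of_forall fun _ => one_ne_zero)
      (hg.trans_tendsto hsub) hsub ?_
    simpa using hlim
  exact hL (tendsto_nhds_unique hslope hg.tendsto_div_nhds_zero)

theorem isLittleO_rpow_sub_nhdsGT {x p : ℝ} (hp : 1 < p) :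
    (fun y => (y - x) ^ p) =o[𝓝[>] x] fun y => y - x := by
  have hsub : Tendsto (fun y : ℝ => y - x) (𝓝[>] x) (𝓝 0) :=
    tendsto_sub_nhds_zero_iff.2 nhdsWithin_le_nhds
  have hsmall : (fun y => (y - x) ^ (p - 1)) =o[𝓝[>] x] fun _ => (1 : ℝ) := by
    have hcont := Real.continuousAt_rpow_const 0 (p - 1) (Or.inr (by linarith))
    rw [isLittleO_one_iff, ← Real.zero_rpow (by linarith : p - 1 ≠ 0)]
    exact hcont.tendsto.comp hsub
  refine (hsmall.mul_isBigO (isBigO_refl (fun y => y - x) _)).congr' ?_ (by simp)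
  filter_upwards [self_mem_nhdsWithin] with y hy
  rw [← Real.rpow_add_one (sub_pos.2 hy).ne', sub_add_cancel]

section Kernel

variable {x y β : ℝ}

theorem integral_sub_rpow_neg (hβ : β < 1) :
    ∫ t in x..y, (y - t) ^ (-β) = (y - x) ^ (1 - β) / (1 - β) := by
  rw [intervalIntegral.integral_comp_sub_left (fun s : ℝ => s ^ (-β)) y, sub_self,
    integral_rpow (Or.inl (by linarith)), Real.zero_rpow (by linarith)]
  ring_nf

theorem intervalIntegrable_sub_rpow_neg (hβ : β < 1) :
    IntervalIntegrable (fun t => (y - t) ^ (-β)) volume x y := by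
  simpa using ((intervalIntegrable_rpow' (by linarith) : IntervalIntegrable
    (fun s : ℝ => s ^ (-β)) volume 0 (y - x)).comp_sub_left y).symm

theorem abs_integral_mul_sub_rpow_neg_le {f : ℝ → ℝ} {M : ℝ} (hβ : β < 1) (hxy : x ≤ y)
    (hf : ∀ t ∈ Set.Ioc x y, |f t| ≤ M) :
    |∫ t in x..y, f t * (y - t) ^ (-β)| ≤ M * ((y - x) ^ (1 - β) / (1 - β)) := by
  rw [← integral_sub_rpow_neg hβ, ← intervalIntegral.integral_const_mul, ← Real.norm_eq_abs]
  refine norm_integral_le_of_norm_le hxy (ae_of_all _ fun t ht => ?_)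
    ((intervalIntegrable_sub_rpow_neg hβ).const_mul M)
  have hkernel : 0 ≤ (y - t) ^ (-β) := Real.rpow_nonneg (sub_nonneg.2 ht.2) _
  rw [Real.norm_eq_abs, abs_mul, abs_of_nonneg hkernel]
  exact mul_le_mul_of_nonneg_right (hf t ht) hkernel

end Kernel

theorem isBigO_caputoIntegral {f : ℝ → ℝ} {x α β C : ℝ} (hα : 0 ≤ α) (hβ : β < 1)
    (hf : ∀ᶠ t in 𝓝[>] x, |f t - f x| ≤ C * (t - x) ^ α) :
    caputoIntegral β x f =O[𝓝[>] x] fun y => (y - x) ^ (α + (1 - β)) := by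
  obtain ⟨u, hxu, hu⟩ := mem_nhdsGT_iff_exists_Ioo_subset.1 hf
  refine IsBigO.of_bound (|(Real.Gamma (1 - β))⁻¹| * (|C| / (1 - β))) ?_
  filter_upwards [Ioo_mem_nhdsGT hxu] with y hy
  have hyx : 0 < y - x := sub_pos.2 hy.1
  have hholder : ∀ t ∈ Set.Ioc x y, |f t - f x| ≤ |C| * (y - x) ^ α := fun t ht => calc
    |f t - f x| ≤ C * (t - x) ^ α := hu ⟨ht.1, ht.2.trans_lt hy.2⟩
    _ ≤ |C| * (t - x) ^ α :=
      mul_le_mul_of_nonneg_right (le_abs_self C) (Real.rpow_nonneg (by linarith [ht.1]) _)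
    _ ≤ |C| * (y - x) ^ α := by gcongr <;> linarith [ht.1, ht.2]
  rw [caputoIntegral, Real.norm_eq_abs, Real.norm_eq_abs, abs_mul,
    abs_of_pos (Real.rpow_pos_of_pos hyx _), Real.rpow_add hyx]
  calc |(Real.Gamma (1 - β))⁻¹| * |∫ t in x..y, (f t - f x) * (y - t) ^ (-β)|
      ≤ |(Real.Gamma (1 - β))⁻¹| * (|C| * (y - x) ^ α * ((y - x) ^ (1 - β) / (1 - β))) := by
        gcongr
        exact abs_integral_mul_sub_rpow_neg_le hβ hy.1.le hholder
    _ = _ := by ring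

theorem local_fractional_derivative_zero_of_holder_general
    (α β a b : ℝ) (hα0 : 0 < α) (hα1 : α < 1) (hβα : β < α)
    (f : ℝ → ℝ) (C : ℝ)
    (hHolder : ∀ x ∈ Set.Icc a b, ∀ y ∈ Set.Icc a b, |f x - f y| ≤ C * |x - y| ^ α)
    (x : ℝ) (hx : x ∈ Set.Ico a b) (L : ℝ)
    (hlim : Tendsto (caputo β x f) (𝓝[>] x) (𝓝 L)) :
    L = 0 := by
  have hβ1 : β < 1 := hβα.trans hα1
  have hHolder_right : ∀ᶠ t in 𝓝[>] x, |f t - f x| ≤ C * (t - x) ^ α := by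
    filter_upwards [Ioo_mem_nhdsGT hx.2] with t ht
    simpa [abs_of_pos (sub_pos.2 ht.1)] using
      hHolder t ⟨hx.1.trans ht.1.le, ht.2.le⟩ x (Set.Ico_subset_Icc_self hx)
  have hsmall : caputoIntegral β x f =o[𝓝[>] x] fun y => y - x :=
    (isBigO_caputoIntegral hα0.le hβ1 hHolder_right).trans_isLittleO
      (isLittleO_rpow_sub_nhdsGT (by linarith))
  rw [caputo_eq_deriv_caputoIntegral] at hlim
  exact eq_zero_of_tendsto_deriv_of_isLittleO hsmall hlim

/-- If `f` is `α`-Hölder continuous on `[a,b]` and `0 < β < α` with `β ∉ ℕ`, then the local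
fractional derivative `f^{(β+)}(x) = lim_{y→x⁺} C_{x⁺}^β f(y)`, when it exists, is zero. -/
theorem local_fractional_derivative_zero_of_holder
    (α β a b : ℝ) (hα0 : 0 < α) (hα1 : α < 1) (hβ0 : 0 < β) (hβα : β < α)
    (hβnat : ∀ n : ℕ, β ≠ (n : ℝ))
    (f : ℝ → ℝ) (C : ℝ)
    (hHolder : ∀ x ∈ Set.Icc a b, ∀ y ∈ Set.Icc a b, |f x - f y| ≤ C * |x - y| ^ α)
    (x : ℝ) (hx : x ∈ Set.Ico a b) (L : ℝ)
    (hlim : Tendsto (caputo β x f) (𝓝[>] x) (𝓝 L)) :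
    L = 0 :=
  local_fractional_derivative_zero_of_holder_general α β a b hα0 hα1 hβα f C hHolder x hx L hlim
end

section
/- With kₙ = ⌊n^{1/(p-1)}⌋ for 2 < p < 3, one has lim_{n→∞} n·kₙ^{1-p} = 1 and lim_{n→∞} (n p /2) ( (p-1) (∑_{k=1}^{kₙ} k^{p-2}) / kₙ^p − 1/kₙ ) = 0. -/
/-!
Write `q = p - 1` and `K = kₙ`. Since `K ^ q ≤ n < (K + 1) ^ q`, the quantity `n K^{-q}` is
squeezed between `1` and `(1 + 1/K) ^ q`. Comparing `∑_{k ≤ K} k^{q-1}` with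
`∫₀^K x^{q-1} dx = K^q / q` for the increasing integrand gives `0 ≤ q ∑ k^{q-1} - K^q ≤ q K^{q-1}`,
so the bracket lies in `[0, q / K²]` and the second sequence is at most
`(p q / 2) (n K^{-q}) K^{q-2}`, which tends to `0` because `q < 2`.
-/

open Filter Topology Finset

theorem sum_Icc_one_eq_sum_range_succ {M : Type*} [AddCommMonoid M] (f : ℕ → M) (K : ℕ) :
    ∑ k ∈ Icc 1 K, f k = ∑ i ∈ range K, f (i + 1) := by
  rw [← Ico_add_one_right_eq_Icc, sum_Ico_eq_sum_range, Nat.add_sub_cancel]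
  simp only [add_comm 1]

section SumRpow

variable {s : ℝ}

theorem integral_rpow_zero_left (hs : -1 < s) (b : ℝ) :
    ∫ x in (0 : ℝ)..b, x ^ s = b ^ (s + 1) / (s + 1) := by
  rw [integral_rpow (Or.inl hs), Real.zero_rpow (by linarith), sub_zero]

theorem rpow_add_one_le_mul_sum_Icc_rpow (hs : 0 ≤ s) (K : ℕ) :
    (K : ℝ) ^ (s + 1) ≤ (s + 1) * ∑ k ∈ Icc 1 K, (k : ℝ) ^ s := by
  have h := MonotoneOn.integral_le_sum (x₀ := 0) (a := K)
    ((Real.monotoneOn_rpow_Ici_of_exponent_nonneg hs).mono Set.Icc_subset_Ici_self)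
  rw [zero_add, integral_rpow_zero_left (by linarith), div_le_iff₀' (by linarith)] at h
  simpa [sum_Icc_one_eq_sum_range_succ (fun k : ℕ => (k : ℝ) ^ s)] using h

theorem mul_sum_Icc_rpow_le (hs : 0 ≤ s) (K : ℕ) :
    (s + 1) * ∑ k ∈ Icc 1 K, (k : ℝ) ^ s ≤ (K : ℝ) ^ (s + 1) + (s + 1) * (K : ℝ) ^ s := by
  have h := MonotoneOn.sum_le_integral (x₀ := 0) (a := K)
    ((Real.monotoneOn_rpow_Ici_of_exponent_nonneg hs).mono Set.Icc_subset_Ici_self)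
  rw [zero_add, integral_rpow_zero_left (by linarith), le_div_iff₀' (by linarith)] at h
  simp only [zero_add] at h
  have hshift : ∑ k ∈ Icc 1 K, (k : ℝ) ^ s + (0 : ℝ) ^ s =
      ∑ i ∈ range K, (i : ℝ) ^ s + (K : ℝ) ^ s := by
    have h' := sum_range_succ' (fun i : ℕ => (i : ℝ) ^ s) K
    rw [sum_range_succ] at h'
    rw [sum_Icc_one_eq_sum_range_succ (fun k : ℕ => (k : ℝ) ^ s)]
    push_cast at h' ⊢
    linarith
  have h0 : (0 : ℝ) ≤ (0 : ℝ) ^ s := Real.rpow_nonneg le_rfl s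
  nlinarith

end SumRpow

section FloorRoot

variable {r : ℝ}

theorem floor_rpow_one_div_rpow_le (hr : 0 < r) {x : ℝ} (hx : 0 ≤ x) :
    (⌊x ^ (1 / r)⌋₊ : ℝ) ^ r ≤ x := by
  calc (⌊x ^ (1 / r)⌋₊ : ℝ) ^ r ≤ (x ^ (1 / r)) ^ r := by
        gcongr; exact Nat.floor_le (by positivity)
    _ = x := by rw [one_div, Real.rpow_inv_rpow hx hr.ne']

theorem lt_floor_rpow_one_div_add_one_rpow (hr : 0 < r) {x : ℝ} (hx : 0 ≤ x) :
    x < ((⌊x ^ (1 / r)⌋₊ : ℝ) + 1) ^ r := by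
  calc x = (x ^ (1 / r)) ^ r := by rw [one_div, Real.rpow_inv_rpow hx hr.ne']
    _ < ((⌊x ^ (1 / r)⌋₊ : ℝ) + 1) ^ r := by
        gcongr; exact Nat.lt_floor_add_one _

theorem tendsto_floor_rpow_one_div_atTop (hr : 0 < r) :
    Tendsto (fun n : ℕ => ⌊(n : ℝ) ^ (1 / r)⌋₊) atTop atTop :=
  tendsto_nat_floor_atTop.comp <|
    (tendsto_rpow_atTop (by positivity)).comp tendsto_natCast_atTop_atTop

theorem tendsto_natCast_mul_floor_rpow_one_div_rpow_neg (hr : 0 < r) :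
    Tendsto (fun n : ℕ => (n : ℝ) * (⌊(n : ℝ) ^ (1 / r)⌋₊ : ℝ) ^ (-r)) atTop (𝓝 1) := by
  set K : ℕ → ℕ := fun n => ⌊(n : ℝ) ^ (1 / r)⌋₊
  have hK : Tendsto (fun n => (K n : ℝ)) atTop atTop :=
    tendsto_natCast_atTop_atTop.comp (tendsto_floor_rpow_one_div_atTop hr)
  have hupper : Tendsto (fun n => (1 + (K n : ℝ)⁻¹) ^ r) atTop (𝓝 1) := by
    simpa using ((tendsto_const_nhds (x := (1 : ℝ))).add hK.inv_tendsto_atTop).rpow_const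
      (p := r) (Or.inl (by norm_num))
  refine tendsto_of_tendsto_of_tendsto_of_le_of_le' tendsto_const_nhds hupper ?_ ?_ <;>
    filter_upwards [hK.eventually_gt_atTop 0] with n hKn <;>
    rw [Real.rpow_neg hKn.le, ← div_eq_mul_inv]
  · rw [one_le_div (by positivity)]
    exact floor_rpow_one_div_rpow_le hr n.cast_nonneg
  · rw [show 1 + (K n : ℝ)⁻¹ = (K n + 1) / K n by field_simp,
      Real.div_rpow (by positivity) hKn.le]
    gcongr
    exact (lt_floor_rpow_one_div_add_one_rpow hr n.cast_nonneg).le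

end FloorRoot

noncomputable def rpowSumRemainder (p : ℝ) (K : ℕ) : ℝ :=
  (p - 1) * (∑ k ∈ Icc 1 K, (k : ℝ) ^ (p - 2)) / (K : ℝ) ^ p - 1 / (K : ℝ)

section Remainder

variable {p : ℝ} {K : ℕ}

theorem rpowSumRemainder_eq (hK : 0 < K) :
    rpowSumRemainder p K =
      ((p - 1) * (∑ k ∈ Icc 1 K, (k : ℝ) ^ (p - 2)) - (K : ℝ) ^ (p - 1)) / (K : ℝ) ^ p := by
  have hK' : (0 : ℝ) < K := by exact_mod_cast hK
  rw [rpowSumRemainder, sub_div, Real.rpow_sub hK', Real.rpow_one,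
    div_div_cancel_left' (by positivity), one_div]

theorem rpowSumRemainder_nonneg (hp : 2 ≤ p) (hK : 0 < K) : 0 ≤ rpowSumRemainder p K := by
  have h := rpow_add_one_le_mul_sum_Icc_rpow (s := p - 2) (by linarith) K
  rw [show p - 2 + 1 = p - 1 by ring] at h
  rw [rpowSumRemainder_eq hK]
  exact div_nonneg (by linarith) (by positivity)

theorem rpowSumRemainder_le (hp : 2 ≤ p) (hK : 0 < K) :
    rpowSumRemainder p K ≤ (p - 1) * ((K : ℝ) ^ 2)⁻¹ := by
  have hK' : (0 : ℝ) < K := by exact_mod_cast hK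
  have h := mul_sum_Icc_rpow_le (s := p - 2) (by linarith) K
  rw [show p - 2 + 1 = p - 1 by ring] at h
  have hpow : ((K : ℝ) ^ 2)⁻¹ * (K : ℝ) ^ p = (K : ℝ) ^ (p - 2) := by
    rw [Real.rpow_sub hK', inv_mul_eq_div, Real.rpow_two]
  rw [rpowSumRemainder_eq hK, div_le_iff₀ (by positivity), mul_assoc, hpow]
  linarith

end Remainder

/-- Key computation for the Cantor-type path: with `kₙ = ⌊n^{1/(p-1)}⌋` and `2 < p < 3`,
`n·kₙ^{1-p} → 1` and `(np/2)((p-1)(∑_{k=1}^{kₙ} k^{p-2})/kₙ^p − 1/kₙ) → 0`. -/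
theorem cantor_remainder_limits (p : ℝ) (hp2 : 2 < p) (hp3 : p < 3) :
    Tendsto (fun n : ℕ =>
        (n : ℝ) * ((⌊(n : ℝ) ^ (1 / (p - 1))⌋₊ : ℝ) ^ (1 - p))) atTop (𝓝 1) ∧
    Tendsto (fun n : ℕ =>
        ((n : ℝ) * p / 2) *
          ((p - 1) * (∑ k ∈ Finset.Icc 1 ⌊(n : ℝ) ^ (1 / (p - 1))⌋₊, (k : ℝ) ^ (p - 2)) /
              (⌊(n : ℝ) ^ (1 / (p - 1))⌋₊ : ℝ) ^ p -
            1 / (⌊(n : ℝ) ^ (1 / (p - 1))⌋₊ : ℝ))) atTop (𝓝 0) := by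
  have hq : 0 < p - 1 := by linarith
  set K : ℕ → ℕ := fun n => ⌊(n : ℝ) ^ (1 / (p - 1))⌋₊
  have hK := tendsto_floor_rpow_one_div_atTop hq
  have hlim : Tendsto (fun n : ℕ => (n : ℝ) * (K n : ℝ) ^ (1 - p)) atTop (𝓝 1) := by
    simpa only [neg_sub] using tendsto_natCast_mul_floor_rpow_one_div_rpow_neg hq
  refine ⟨hlim, ?_⟩
  have hdecay : Tendsto (fun n => (K n : ℝ) ^ (p - 3)) atTop (𝓝 0) := by
    simpa only [neg_sub, Function.comp_def] using
      (tendsto_rpow_neg_atTop (by linarith : 0 < 3 - p)).comp (tendsto_natCast_atTop_atTop.comp hK)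
  have hbound := (hlim.const_mul (p * (p - 1) / 2)).mul hdecay
  rw [mul_zero] at hbound
  refine tendsto_of_tendsto_of_tendsto_of_le_of_le' tendsto_const_nhds hbound ?_ ?_ <;>
    filter_upwards [hK.eventually_gt_atTop 0] with n hKn
  · exact mul_nonneg (by positivity) (rpowSumRemainder_nonneg hp2.le hKn)
  · have hKn' : (0 : ℝ) < K n := by exact_mod_cast hKn
    calc (n : ℝ) * p / 2 * rpowSumRemainder p (K n)
        ≤ (n : ℝ) * p / 2 * ((p - 1) * ((K n : ℝ) ^ 2)⁻¹) := by
          gcongr; exact rpowSumRemainder_le hp2.le hKn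
      _ = p * (p - 1) / 2 * ((n : ℝ) * (K n : ℝ) ^ (1 - p)) * (K n : ℝ) ^ (p - 3) := by
          rw [mul_assoc _ ((n : ℝ) * _), mul_assoc (n : ℝ), ← Real.rpow_add hKn',
            show 1 - p + (p - 3) = -(2 : ℕ) by push_cast; ring, Real.rpow_neg hKn'.le,
            Real.rpow_natCast]
          ring
end

section
/- Let φ : [0,∞) → [0,∞) be strictly increasing, continuous, convex with φ(0) = 0, and such that log φ(x) is a convex function of log x. Then for any two nonnegative sequences (aₙ) and (bₙ), φ⁻¹( ∑ₙ φ(aₙ + bₙ) ) ≤ φ⁻¹( ∑ₙ φ(aₙ) ) + φ⁻¹( ∑ₙ φ(bₙ) ) (generalized Minkowski inequality). -/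
/-!
Normalise by `A = φ⁻¹(∑ φ(aᵢ))` and `B = φ⁻¹(∑ φ(bᵢ))`. Geometric convexity of `φ` says that the
growth ratio `φ(x t) / φ(x)` is increasing in `x`; since every `aᵢ ≤ A`, this gives
`∑ φ(aᵢ t) ≤ φ(A t)` for `t ≥ 1`, and likewise for `b`. Writing
`aᵢ + bᵢ = λ (aᵢ (A+B)/A) + (1-λ) (bᵢ (A+B)/B)` with `λ = A/(A+B)`, convexity of `φ` then yields
`∑ φ(aᵢ + bᵢ) ≤ λ φ(A+B) + (1-λ) φ(A+B) = φ(A+B)`, and `φ⁻¹` is monotone.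
-/

open Set Finset

theorem ConvexOn.map_add_sub_map_le {s : Set ℝ} {f : ℝ → ℝ} (hf : ConvexOn ℝ s f)
    {u v τ : ℝ} (hu : u ∈ s) (hv : v + τ ∈ s) (huv : u ≤ v) (hτ : 0 ≤ τ) :
    f (u + τ) - f u ≤ f (v + τ) - f v := by
  rcases hτ.eq_or_lt with rfl | hτ
  · simp
  have hd : 0 < v + τ - u := by linarith
  -- `u + τ` and `v` are the two convex combinations of `u` and `v + τ` with weights `1 - μ`, `μ`
  set μ := τ / (v + τ - u)
  have hμ0 : 0 ≤ μ := by positivity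
  have hμ1 : μ ≤ 1 := (div_le_one hd).2 (by linarith)
  have hμd : μ * (v + τ - u) = τ := div_mul_cancel₀ _ hd.ne'
  have h₁ := hf.2 hu hv (sub_nonneg.2 hμ1) hμ0 (sub_add_cancel 1 μ)
  have h₂ := hf.2 hu hv hμ0 (sub_nonneg.2 hμ1) (add_sub_cancel μ 1)
  simp only [smul_eq_mul] at h₁ h₂
  rw [show (1 - μ) * u + μ * (v + τ) = u + τ by linear_combination hμd] at h₁
  rw [show μ * u + (1 - μ) * (v + τ) = v by linear_combination -hμd] at h₂
  linarith

section

variable {φ : ℝ → ℝ}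

theorem pos_of_strictMonoOn_Ici (hmono : StrictMonoOn φ (Ici 0)) (h0 : φ 0 = 0)
    {x : ℝ} (hx : 0 < x) : 0 < φ x :=
  h0 ▸ hmono self_mem_Ici hx.le hx

theorem nonneg_of_strictMonoOn_Ici (hmono : StrictMonoOn φ (Ici 0)) (h0 : φ 0 = 0)
    {x : ℝ} (hx : 0 ≤ x) : 0 ≤ φ x :=
  h0 ▸ hmono.monotoneOn self_mem_Ici hx hx

theorem map_mul_div_map_le_of_geomConvex (hpos : ∀ x, 0 < x → 0 < φ x)
    (hlogconv : ConvexOn ℝ univ (fun u => Real.log (φ (Real.exp u))))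
    {x y t : ℝ} (hx : 0 < x) (hxy : x ≤ y) (ht : 1 ≤ t) :
    φ (x * t) / φ x ≤ φ (y * t) / φ y := by
  have hy : 0 < y := hx.trans_le hxy
  have ht0 : 0 < t := one_pos.trans_le ht
  have key := hlogconv.map_add_sub_map_le (mem_univ (Real.log x)) (mem_univ _)
    (Real.log_le_log hx hxy) (Real.log_nonneg ht)
  simp only [Real.exp_add, Real.exp_log hx, Real.exp_log hy, Real.exp_log ht0] at key
  rw [← Real.log_div (hpos _ (by positivity)).ne' (hpos _ hx).ne',
    ← Real.log_div (hpos _ (by positivity)).ne' (hpos _ hy).ne'] at key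
  exact (Real.log_le_log_iff (div_pos (hpos _ (by positivity)) (hpos _ hx))
    (div_pos (hpos _ (by positivity)) (hpos _ hy))).1 key

theorem sum_map_mul_le_map_mul {ι : Type*} {s : Finset ι} {c : ι → ℝ} {C t : ℝ}
    (hmono : StrictMonoOn φ (Ici 0)) (h0 : φ 0 = 0)
    (hlogconv : ConvexOn ℝ univ (fun u => Real.log (φ (Real.exp u))))
    (hc : ∀ i ∈ s, 0 ≤ c i) (hC : 0 < C) (hφC : φ C = ∑ i ∈ s, φ (c i)) (ht : 1 ≤ t) :
    ∑ i ∈ s, φ (c i * t) ≤ φ (C * t) := by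
  have hφC_pos : 0 < φ C := pos_of_strictMonoOn_Ici hmono h0 hC
  have hterm : ∀ i ∈ s, φ (c i * t) ≤ φ (c i) * (φ (C * t) / φ C) := by
    intro i hi
    rcases (hc i hi).eq_or_lt with hci | hci
    · simp [← hci, h0]
    have hciC : c i ≤ C := by
      refine (hmono.le_iff_le (hc i hi) hC.le).1 ?_
      rw [hφC]
      exact single_le_sum (fun j hj => nonneg_of_strictMonoOn_Ici hmono h0 (hc j hj)) hi
    have hratio := map_mul_div_map_le_of_geomConvex
      (fun x hx => pos_of_strictMonoOn_Ici hmono h0 hx) hlogconv hci hciC ht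
    rw [mul_div_assoc', le_div_iff₀ hφC_pos, mul_comm (φ (c i))]
    exact (div_le_div_iff₀ (pos_of_strictMonoOn_Ici hmono h0 hci) hφC_pos).1 hratio
  calc ∑ i ∈ s, φ (c i * t) ≤ ∑ i ∈ s, φ (c i) * (φ (C * t) / φ C) := sum_le_sum hterm
    _ = φ (C * t) := by rw [← sum_mul, ← hφC, mul_div_cancel₀ _ hφC_pos.ne']

theorem sum_map_add_le_of_pos {ι : Type*} {s : Finset ι} {a b : ι → ℝ} {A B : ℝ}
    (hmono : StrictMonoOn φ (Ici 0)) (h0 : φ 0 = 0) (hconv : ConvexOn ℝ (Ici 0) φ)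
    (hlogconv : ConvexOn ℝ univ (fun u => Real.log (φ (Real.exp u))))
    (ha : ∀ i ∈ s, 0 ≤ a i) (hb : ∀ i ∈ s, 0 ≤ b i) (hA : 0 < A) (hB : 0 < B)
    (hφA : φ A = ∑ i ∈ s, φ (a i)) (hφB : φ B = ∑ i ∈ s, φ (b i)) :
    ∑ i ∈ s, φ (a i + b i) ≤ φ (A + B) := by
  have hAB : 0 < A + B := add_pos hA hB
  set t₁ := (A + B) / A
  set t₂ := (A + B) / B
  have ht₁ : 1 ≤ t₁ := (le_div_iff₀ hA).2 (by linarith)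
  have ht₂ : 1 ≤ t₂ := (le_div_iff₀ hB).2 (by linarith)
  have hsplit : ∀ i ∈ s,
      φ (a i + b i) ≤ A / (A + B) * φ (a i * t₁) + B / (A + B) * φ (b i * t₂) := by
    intro i hi
    have h := hconv.2 (mem_Ici.2 (mul_nonneg (ha i hi) (zero_le_one.trans ht₁)))
      (mem_Ici.2 (mul_nonneg (hb i hi) (zero_le_one.trans ht₂)))
      (by positivity : 0 ≤ A / (A + B)) (by positivity : 0 ≤ B / (A + B))
      (by field_simp)
    have hcomb : A / (A + B) * (a i * t₁) + B / (A + B) * (b i * t₂) = a i + b i := by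
      simp only [t₁, t₂]
      field_simp
    simpa only [smul_eq_mul, hcomb] using h
  calc ∑ i ∈ s, φ (a i + b i)
      ≤ ∑ i ∈ s, (A / (A + B) * φ (a i * t₁) + B / (A + B) * φ (b i * t₂)) :=
        sum_le_sum hsplit
    _ = A / (A + B) * ∑ i ∈ s, φ (a i * t₁) + B / (A + B) * ∑ i ∈ s, φ (b i * t₂) := by
        rw [sum_add_distrib, mul_sum, mul_sum]
    _ ≤ A / (A + B) * φ (A * t₁) + B / (A + B) * φ (B * t₂) := by
        gcongr
        · exact sum_map_mul_le_map_mul hmono h0 hlogconv ha hA hφA ht₁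
        · exact sum_map_mul_le_map_mul hmono h0 hlogconv hb hB hφB ht₂
    _ = φ (A + B) := by
        rw [mul_div_cancel₀ _ hA.ne', mul_div_cancel₀ _ hB.ne']
        field_simp

theorem sum_map_add_eq_of_zero {ι : Type*} {s : Finset ι} {a b : ι → ℝ}
    (hmono : StrictMonoOn φ (Ici 0)) (h0 : φ 0 = 0) (ha : ∀ i ∈ s, 0 ≤ a i)
    (hφa : φ 0 = ∑ i ∈ s, φ (a i)) :
    ∑ i ∈ s, φ (a i + b i) = ∑ i ∈ s, φ (b i) := by
  have hzero := (sum_eq_zero_iff_of_nonneg fun i hi =>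
    nonneg_of_strictMonoOn_Ici hmono h0 (ha i hi)).1 (h0 ▸ hφa).symm
  refine sum_congr rfl fun i hi => ?_
  rw [hmono.injOn (ha i hi) self_mem_Ici ((hzero i hi).trans h0.symm), zero_add]

theorem sum_map_add_le {ι : Type*} {s : Finset ι} {a b : ι → ℝ} {A B : ℝ}
    (hmono : StrictMonoOn φ (Ici 0)) (h0 : φ 0 = 0) (hconv : ConvexOn ℝ (Ici 0) φ)
    (hlogconv : ConvexOn ℝ univ (fun u => Real.log (φ (Real.exp u))))
    (ha : ∀ i ∈ s, 0 ≤ a i) (hb : ∀ i ∈ s, 0 ≤ b i) (hA : 0 ≤ A) (hB : 0 ≤ B)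
    (hφA : φ A = ∑ i ∈ s, φ (a i)) (hφB : φ B = ∑ i ∈ s, φ (b i)) :
    ∑ i ∈ s, φ (a i + b i) ≤ φ (A + B) := by
  rcases hA.eq_or_lt with rfl | hA
  · rw [sum_map_add_eq_of_zero hmono h0 ha hφA, zero_add, hφB]
  rcases hB.eq_or_lt with rfl | hB
  · simp_rw [add_comm (a _)]
    rw [sum_map_add_eq_of_zero hmono h0 hb hφB, add_zero, hφA]
  exact sum_map_add_le_of_pos hmono h0 hconv hlogconv ha hb hA hB hφA hφB

end

theorem generalized_minkowski_general
    (φ φinv : ℝ → ℝ)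
    (hmono : StrictMonoOn φ (Set.Ici 0))
    (h0 : φ 0 = 0)
    (hconv : ConvexOn ℝ (Set.Ici 0) φ)
    (hlogconv : ConvexOn ℝ Set.univ (fun u => Real.log (φ (Real.exp u))))
    (hinv₂ : ∀ y ∈ Set.Ici (0 : ℝ), φinv y ∈ Set.Ici (0 : ℝ) ∧ φ (φinv y) = y)
    {ι : Type*} (s : Finset ι) (a b : ι → ℝ)
    (ha : ∀ i ∈ s, 0 ≤ a i) (hb : ∀ i ∈ s, 0 ≤ b i) :
    φinv (∑ i ∈ s, φ (a i + b i)) ≤ φinv (∑ i ∈ s, φ (a i)) + φinv (∑ i ∈ s, φ (b i)) := by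
  have hinv : ∀ c : ι → ℝ, (∀ i ∈ s, 0 ≤ c i) →
      0 ≤ φinv (∑ i ∈ s, φ (c i)) ∧ φ (φinv (∑ i ∈ s, φ (c i))) = ∑ i ∈ s, φ (c i) :=
    fun c hc => hinv₂ _ (sum_nonneg fun i hi => nonneg_of_strictMonoOn_Ici hmono h0 (hc i hi))
  obtain ⟨hA, hφA⟩ := hinv a ha
  obtain ⟨hB, hφB⟩ := hinv b hb
  obtain ⟨hC, hφC⟩ := hinv (fun i => a i + b i) fun i hi => add_nonneg (ha i hi) (hb i hi)
  refine (hmono.le_iff_le hC (add_nonneg hA hB)).1 ?_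
  rw [hφC]
  exact sum_map_add_le hmono h0 hconv hlogconv ha hb hA hB hφA hφB

/-- Generalized Minkowski inequality: if `φ : [0,∞) → [0,∞)` is strictly increasing,
continuous, convex, `φ(0) = 0`, and `log φ` is a convex function of `log x`, then for
nonnegative sequences `(aᵢ)`, `(bᵢ)`,
`φ⁻¹(∑ φ(aᵢ+bᵢ)) ≤ φ⁻¹(∑ φ(aᵢ)) + φ⁻¹(∑ φ(bᵢ))`. -/
theorem generalized_minkowski
    (φ φinv : ℝ → ℝ)
    (hmono : StrictMonoOn φ (Set.Ici 0))
    (hcont : ContinuousOn φ (Set.Ici 0))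
    (h0 : φ 0 = 0)
    (hconv : ConvexOn ℝ (Set.Ici 0) φ)
    (hlogconv : ConvexOn ℝ Set.univ (fun u => Real.log (φ (Real.exp u))))
    (hinv₁ : ∀ x ∈ Set.Ici (0 : ℝ), φinv (φ x) = x)
    (hinv₂ : ∀ y ∈ Set.Ici (0 : ℝ), φinv y ∈ Set.Ici (0 : ℝ) ∧ φ (φinv y) = y)
    {ι : Type*} (s : Finset ι) (a b : ι → ℝ)
    (ha : ∀ i ∈ s, 0 ≤ a i) (hb : ∀ i ∈ s, 0 ≤ b i) :
    φinv (∑ i ∈ s, φ (a i + b i)) ≤ φinv (∑ i ∈ s, φ (a i)) + φinv (∑ i ∈ s, φ (b i)) :=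
  generalized_minkowski_general φ φinv hmono h0 hconv hlogconv hinv₂ s a b ha hb
end
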